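/- arXiv:2405.13534 — 6 statements merged into one kernel-verified Lean document; each statement's English description precedes it below -/
import Mathlib

section
/- Let F be a free group on a finite set and let r ∈ ℕ. Then every ascending chain H₁ ≤ H₂ ≤ ⋯ of subgroups of F, each isomorphic to the free group of rank r, stabilizes. -/
private lemma free_group_accf_aux_rank {S : Type*} {r : ℕ} (g : Fin r → (S →₀ ℤ))
    (f : Fin (r + 1) → S) (hf : Function.Injective f)
    (hmem : ∀ j, Finsupp.single (f j) (1 : ℤ) ∈ AddSubgroup.closure (Set.range g)) :
    False := by
  set P : Submodule ℤ (S →₀ ℤ) := Submodule.span ℤ (Set.range g) with hP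
  have hPle : AddSubgroup.closure (Set.range g) ≤ P.toAddSubgroup := by
    rw [AddSubgroup.closure_le]
    exact Submodule.subset_span
  have hmemP : ∀ j, Finsupp.single (f j) (1 : ℤ) ∈ P := fun j => hPle (hmem j)
  have hli : LinearIndependent ℤ (fun j : Fin (r + 1) => Finsupp.single (f j) (1 : ℤ)) := by
    have h := (Finsupp.basisSingleOne (R := ℤ) (ι := S)).linearIndependent.comp f hf
    simp only [Finsupp.coe_basisSingleOne, Function.comp_def] at h
    convert h
  have hli' : LinearIndependent ℤ (fun j : Fin (r + 1) => (⟨_, hmemP j⟩ : P)) :=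
    LinearIndependent.of_comp P.subtype hli
  have h1 := hli'.cardinal_lift_le_rank
  have h2 := rank_span_le (R := ℤ) (Set.range g)
  have h3 := Cardinal.mk_range_le_lift (f := g)
  have hchain := (h1.trans (Cardinal.lift_le.mpr h2)).trans h3
  have : (r : ℕ) + 1 ≤ r := by
    have h4 := hchain
    simp [Cardinal.mk_fintype] at h4
  omega

/-- Free groups satisfy ACCF: every ascending chain of subgroups of a finitely generated
free group, each free of the same rank `r`, stabilizes (Takahasi, Higman). -/
theorem free_group_accf {α : Type*} [Finite α] (r : ℕ)
    (H : ℕ → Subgroup (FreeGroup α)) (hchain : ∀ i, H i ≤ H (i + 1))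
    (hiso : ∀ i, Nonempty (H i ≃* FreeGroup (Fin r))) :
    ∃ N, ∀ i, N ≤ i → H i = H N := by
  classical
  have hmono : Monotone H := monotone_nat_of_le_succ hchain
  set L : Subgroup (FreeGroup α) := ⨆ i, H i with hLdef
  have hHL : ∀ i, H i ≤ L := fun i => le_iSup H i
  have hmemL : ∀ x : FreeGroup α, x ∈ L ↔ ∃ i, x ∈ H i := fun x =>
    Subgroup.mem_iSup_of_directed hmono.directed_le
  set S := IsFreeGroup.Generators L with hSdef
  let φ : L →* Multiplicative (S →₀ ℤ) :=
    IsFreeGroup.lift fun s => Multiplicative.ofAdd (Finsupp.single s (1 : ℤ))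
  have hφ : ∀ s : S, φ (IsFreeGroup.of s) = Multiplicative.ofAdd (Finsupp.single s (1 : ℤ)) :=
    fun s => IsFreeGroup.lift_of _ _
  have key : ∀ f : Fin (r + 1) → S, ¬ Function.Injective f := by
    intro f hf
    set x : Fin (r + 1) → L := fun j => IsFreeGroup.of (f j) with hx
    have hex : ∀ j, ∃ i, ((x j : FreeGroup α)) ∈ H i := fun j => (hmemL _).1 (x j).2
    choose idx hidx using hex
    set i := Finset.univ.sup idx with hi
    have hxi : ∀ j, (x j : FreeGroup α) ∈ H i :=
      fun j => hmono (Finset.le_sup (Finset.mem_univ j)) (hidx j)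
    obtain ⟨e⟩ := hiso i
    set ψ : FreeGroup (Fin r) →* Multiplicative (S →₀ ℤ) :=
      φ.comp ((Subgroup.inclusion (hHL i)).comp e.symm.toMonoidHom) with hψ
    have hψx : ∀ j, ψ (e ⟨(x j : FreeGroup α), hxi j⟩)
        = Multiplicative.ofAdd (Finsupp.single (f j) (1 : ℤ)) := by
      intro j
      show φ (Subgroup.inclusion (hHL i) (e.symm (e _))) = _
      rw [e.symm_apply_apply]
      have h1 : Subgroup.inclusion (hHL i) ⟨(x j : FreeGroup α), hxi j⟩ = x j := rfl
      rw [h1]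
      exact hφ (f j)
    have hrange : ∀ y : FreeGroup (Fin r),
        ψ y ∈ Subgroup.closure (Set.range fun k : Fin r => ψ (FreeGroup.of k)) := by
      intro y
      have h1 : ψ y ∈ Subgroup.map ψ ⊤ := ⟨y, Subgroup.mem_top y, rfl⟩
      rw [← FreeGroup.closure_range_of, MonoidHom.map_closure, ← Set.range_comp] at h1
      exact h1
    have hadd : ∀ j, Finsupp.single (f j) (1 : ℤ) ∈
        AddSubgroup.closure (Set.range fun k : Fin r => Multiplicative.toAdd (ψ (FreeGroup.of k))) := by
      intro j
      have h := hrange (e ⟨(x j : FreeGroup α), hxi j⟩)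
      rw [hψx j] at h
      have hle : Subgroup.closure (Set.range fun k : Fin r => ψ (FreeGroup.of k)) ≤
          AddSubgroup.toSubgroup (A := S →₀ ℤ)
            (AddSubgroup.closure (Set.range fun k : Fin r => Multiplicative.toAdd (ψ (FreeGroup.of k)))) := by
        rw [Subgroup.closure_le]
        rintro t ⟨k, rfl⟩
        have hmem2 : Multiplicative.toAdd (ψ (FreeGroup.of k)) ∈ AddSubgroup.closure
            (Set.range fun k : Fin r => Multiplicative.toAdd (ψ (FreeGroup.of k))) :=
          AddSubgroup.subset_closure ⟨k, rfl⟩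
        exact hmem2
      exact hle h
    exact free_group_accf_aux_rank _ f hf hadd
  have hSfin : Finite S := by
    by_contra h
    rw [not_finite_iff_infinite] at h
    exact key (Fin.valEmbedding.trans (Infinite.natEmbedding S))
      (Fin.valEmbedding.trans (Infinite.natEmbedding S)).injective
  have htop : Subgroup.closure (Set.range (IsFreeGroup.of : S → L)) = ⊤ := by
    have h1 : Set.range (IsFreeGroup.of : S → L) =
        ⇑(IsFreeGroup.mulEquiv L).toMonoidHom '' Set.range (FreeGroup.of : S → FreeGroup S) := by
      rw [← Set.range_comp]; rfl
    rw [h1, ← MonoidHom.map_closure, FreeGroup.closure_range_of, ← MonoidHom.range_eq_map,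
      MonoidHom.range_eq_top]
    exact (IsFreeGroup.mulEquiv L).surjective
  haveI : Fintype S := Fintype.ofFinite S
  have hex2 : ∀ s : S, ∃ i, ((IsFreeGroup.of s : L) : FreeGroup α) ∈ H i :=
    fun s => (hmemL _).1 (IsFreeGroup.of s : L).2
  choose idx2 hidx2 using hex2
  set N := Finset.univ.sup idx2 with hN
  have hgen : ∀ s : S, ((IsFreeGroup.of s : L) : FreeGroup α) ∈ H N :=
    fun s => hmono (Finset.le_sup (Finset.mem_univ s)) (hidx2 s)
  have hLN : ∀ x ∈ L, x ∈ H N := by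
    intro x hx
    have h2 : Subgroup.closure (Set.range (IsFreeGroup.of : S → L)) ≤
        Subgroup.comap L.subtype (H N) := by
      rw [Subgroup.closure_le]
      rintro t ⟨s, rfl⟩
      exact hgen s
    have h3 : (⟨x, hx⟩ : L) ∈ Subgroup.comap L.subtype (H N) :=
      h2 (htop ▸ Subgroup.mem_top _)
    exact h3
  refine ⟨N, fun i hi => le_antisymm (fun x hx => hLN x (hHL i hx)) (hmono hi)⟩
end

section
/- Let G be a group, let r ∈ ℕ, and let H₁ ≤ H₂ ≤ ⋯ ≤ G be an ascending chain of subgroups each isomorphic to the free group of rank r. Then there exist r' ≤ r and an ascending chain K₁ ≤ K₂ ≤ ⋯ ≤ G of subgroups, each isomorphic to the free group of rank r', such that for all i the subgroup K_i is not contained in any proper free factor of K_{i+1}, and such that the chain (H_i) stabilizes if and only if the chain (K_i) stabilizes. -/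
/-- `K` is a free factor of `H` (both subgroups of an ambient group `G`): there is a
subgroup `L ≤ H` such that the induced map from the free product `K ∗ L` to `H` is an
isomorphism. -/
def IsFreeFactorOf {G : Type*} [Group G] (K H : Subgroup G) : Prop :=
  ∃ (hK : K ≤ H) (L : Subgroup G) (hL : L ≤ H),
    Function.Bijective (Monoid.Coprod.lift (Subgroup.inclusion hK) (Subgroup.inclusion hL))

section AuxRCNPFF

open Monoid

variable {G : Type*} [Group G]

lemma IsFreeFactorOf.le' {K H : Subgroup G} (h : IsFreeFactorOf K H) : K ≤ H := by
  obtain ⟨h, -⟩ := h; exact h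

/-- Precomposition equivalence on monoid hom spaces. -/
private def homCongrRC {A B C : Type*} [Group A] [Group B] [Group C] (e : A ≃* B) :
    (A →* C) ≃ (B →* C) where
  toFun f := f.comp e.symm.toMonoidHom
  invFun f := f.comp e.toMonoidHom
  left_inv f := by ext x; simp
  right_inv f := by ext x; simp

private abbrev T2RC : Type := Multiplicative (ZMod 2)

private lemma card_T2RC : Nat.card T2RC = 2 := by
  simp [Nat.card_eq_fintype_card]

private lemma card_hom_freeRC (α : Type*) :
    Nat.card (FreeGroup α →* T2RC) = Nat.card (α → T2RC) :=
  Nat.card_congr (FreeGroup.lift (β := T2RC)).symm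

private lemma finite_of_card_fun_ne_zeroRC {α : Type*}
    (h : Nat.card (α → T2RC) ≠ 0) : Finite α := by
  by_contra hinf
  rw [not_finite_iff_infinite] at hinf
  exact h Nat.card_eq_zero_of_infinite

private lemma isFreeGroup_of_leRC {H : Subgroup G} {r : ℕ} (e : H ≃* FreeGroup (Fin r))
    {K : Subgroup G} (hK : K ≤ H) : IsFreeGroup K :=
  IsFreeGroup.ofMulEquiv
    ((e.subgroupMap (K.subgroupOf H)).symm.trans (Subgroup.subgroupOfEquivOfLe hK))

/-- A proper free factor of a free group of rank `r` is free of some rank `s < r`. -/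
private lemma rank_lt_of_proper_free_factorRC {H L : Subgroup G} {r : ℕ}
    (e : H ≃* FreeGroup (Fin r)) (hff : IsFreeFactorOf L H) (hne : L ≠ H) :
    ∃ s, s < r ∧ Nonempty (L ≃* FreeGroup (Fin s)) := by
  obtain ⟨hLH, M, hMH, hbij⟩ := hff
  haveI iL : IsFreeGroup L := isFreeGroup_of_leRC e hLH
  haveI iM : IsFreeGroup M := isFreeGroup_of_leRC e hMH
  set X := IsFreeGroup.Generators ↥L with hX
  set Y := IsFreeGroup.Generators ↥M with hY
  have tL : ↥L ≃* FreeGroup X := IsFreeGroup.toFreeGroup ↥L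
  have tM : ↥M ≃* FreeGroup Y := IsFreeGroup.toFreeGroup ↥M
  have Φ : Coprod ↥L ↥M ≃* ↥H := MulEquiv.ofBijective _ hbij
  have c1 : Nat.card (↥L →* T2RC) = Nat.card (X → T2RC) :=
    (Nat.card_congr (homCongrRC tL)).trans (card_hom_freeRC X)
  have c2 : Nat.card (↥M →* T2RC) = Nat.card (Y → T2RC) :=
    (Nat.card_congr (homCongrRC tM)).trans (card_hom_freeRC Y)
  have c3 : Nat.card (Coprod ↥L ↥M →* T2RC) =
      Nat.card (↥L →* T2RC) * Nat.card (↥M →* T2RC) := by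
    rw [← Nat.card_prod]
    exact Nat.card_congr (Coprod.liftEquiv (M := ↥L) (N := ↥M) (P := T2RC)).symm
  have c4 : Nat.card (↥H →* T2RC) = Nat.card (Coprod ↥L ↥M →* T2RC) :=
    Nat.card_congr (homCongrRC Φ).symm
  have c5 : Nat.card (↥H →* T2RC) = 2 ^ r := by
    rw [Nat.card_congr (homCongrRC (C := T2RC) e), card_hom_freeRC, Nat.card_fun, card_T2RC]
    simp
  have key : Nat.card (X → T2RC) * Nat.card (Y → T2RC) = 2 ^ r := by
    rw [← c1, ← c2, ← c3, ← c4, c5]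
  have h2r : (0 : ℕ) < 2 ^ r := pow_pos (by norm_num) r
  have hx0 : Nat.card (X → T2RC) ≠ 0 := by
    intro h; rw [h, zero_mul] at key; omega
  have hy0 : Nat.card (Y → T2RC) ≠ 0 := by
    intro h; rw [h, mul_zero] at key; omega
  haveI fX : Finite X := finite_of_card_fun_ne_zeroRC hx0
  haveI fY : Finite Y := finite_of_card_fun_ne_zeroRC hy0
  have cX : Nat.card (X → T2RC) = 2 ^ Nat.card X := by rw [Nat.card_fun, card_T2RC]
  have cY : Nat.card (Y → T2RC) = 2 ^ Nat.card Y := by rw [Nat.card_fun, card_T2RC]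
  have key2 : 2 ^ (Nat.card X + Nat.card Y) = 2 ^ r := by
    rw [pow_add]; rw [cX, cY] at key; exact key
  have hsum : Nat.card X + Nat.card Y = r := Nat.pow_right_injective (le_refl 2) key2
  have hYpos : Nat.card Y ≠ 0 := by
    intro h0
    haveI : IsEmpty Y := by
      rcases Nat.card_eq_zero.mp h0 with h | h
      · exact h
      · exact absurd h (not_infinite_iff_finite.mpr fY)
    haveI : Subsingleton (FreeGroup Y) := by infer_instance
    haveI : Subsingleton ↥M := tM.toEquiv.subsingleton
    have hMbot : M = ⊥ := Subgroup.eq_bot_of_subsingleton M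
    subst hMbot
    have hr : MonoidHom.range (Coprod.lift (Subgroup.inclusion hLH) (Subgroup.inclusion hMH))
        = ⊤ := MonoidHom.range_eq_top_of_surjective _ hbij.2
    rw [Coprod.range_lift, Subgroup.inclusion_range, Subgroup.inclusion_range,
      Subgroup.bot_subgroupOf, sup_bot_eq] at hr
    exact hne (le_antisymm hLH (Subgroup.subgroupOf_eq_top.mp hr))
  haveI := Fintype.ofFinite X
  refine ⟨Nat.card X, by omega,
    ⟨tL.trans (FreeGroup.freeGroupCongr
      (Fintype.equivFinOfCardEq (by rw [← Nat.card_eq_fintype_card])))⟩⟩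

private lemma exists_strictMono_natRC {P : ℕ → Prop} (h : ∀ N, ∃ i, N ≤ i ∧ P i) :
    ∃ f : ℕ → ℕ, StrictMono f ∧ ∀ k, P (f k) := by
  choose g hg₁ hg₂ using h
  refine ⟨fun k => Nat.rec (g 0) (fun _ prev => g (prev + 1)) k,
    strictMono_nat_of_lt_succ fun n => ?_, fun k => ?_⟩
  · exact Nat.lt_of_lt_of_le (Nat.lt_succ_self _) (hg₁ _)
  · cases k with
    | zero => exact hg₂ 0
    | succ n => exact hg₂ _

/-- Main auxiliary statement, proved by strong induction on the rank. -/
private lemma reduce_chain_auxRC :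
    ∀ (r : ℕ) (H : ℕ → Subgroup G), (∀ i, H i ≤ H (i + 1)) →
    (∀ i, Nonempty (H i ≃* FreeGroup (Fin r))) →
    ∃ (r' : ℕ), r' ≤ r ∧ ∃ K : ℕ → Subgroup G,
      (∀ i, K i ≤ K (i + 1)) ∧
      (∀ i, Nonempty (K i ≃* FreeGroup (Fin r'))) ∧
      (∀ i, ¬ ∃ L : Subgroup G, IsFreeFactorOf L (K (i + 1)) ∧ L ≠ K (i + 1) ∧ K i ≤ L) ∧
      ((∃ N, ∀ i, N ≤ i → H i = H N) ↔ (∃ N, ∀ i, N ≤ i → K i = K N)) := by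
  intro r
  induction r using Nat.strong_induction_on with
  | _ r IH =>
    intro H hchain hiso
    have hmono : Monotone H := monotone_nat_of_le_succ hchain
    by_cases hstab : ∃ N, ∀ i, N ≤ i → H i = H N
    · -- the chain stabilizes: take the constant chain
      obtain ⟨N, hN⟩ := hstab
      refine ⟨r, le_refl r, fun _ => H N, fun _ => le_refl _, fun _ => hiso N, ?_, ?_⟩
      · rintro i ⟨L, hff, hne, hle⟩
        exact hne (le_antisymm hff.le' hle)
      · exact iff_of_true ⟨N, hN⟩ ⟨0, fun _ _ => rfl⟩
    · by_cases htail : ∃ N, ∀ i, N ≤ i →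
        ¬ ∃ L : Subgroup G, IsFreeFactorOf L (H (i + 1)) ∧ L ≠ H (i + 1) ∧ H i ≤ L
      · -- eventually no bad indices: shift the chain
        obtain ⟨N, hN⟩ := htail
        refine ⟨r, le_refl r, fun j => H (N + j), fun j => hchain (N + j),
          fun j => hiso (N + j), fun j => hN (N + j) (Nat.le_add_right N j), ?_⟩
        constructor
        · intro h; exact absurd h hstab
        · rintro ⟨Nk, hNk⟩
          exfalso; apply hstab
          refine ⟨N + Nk, fun i hi => ?_⟩
          have e1 : i = N + (i - N) := by omega
          rw [e1]
          exact hNk (i - N) (by omega)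
      · -- infinitely many bad indices: extract a chain of smaller rank
        push_neg at htail
        -- pigeonhole on the rank of the chosen free factors
        have hbad' : ∀ i, (∃ L : Subgroup G, IsFreeFactorOf L (H (i + 1)) ∧ L ≠ H (i + 1)
            ∧ H i ≤ L) → ∃ s, s < r ∧ ∃ L : Subgroup G, IsFreeFactorOf L (H (i + 1)) ∧
            H i ≤ L ∧ Nonempty (L ≃* FreeGroup (Fin s)) := by
          rintro i ⟨L, hff, hne, hle⟩
          obtain ⟨s, hs, hiso'⟩ :=
            rank_lt_of_proper_free_factorRC (hiso (i + 1)).some hff hne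
          exact ⟨s, hs, L, hff, hle, hiso'⟩
        have hfreq : ∃ s, s < r ∧ ∀ N, ∃ i, N ≤ i ∧
            ∃ L : Subgroup G, IsFreeFactorOf L (H (i + 1)) ∧ H i ≤ L ∧
              Nonempty (L ≃* FreeGroup (Fin s)) := by
          by_contra hcon
          push_neg at hcon
          set Nf : ℕ → ℕ := fun s => if h : s < r then
            (hcon s h).choose else 0 with hNf
          obtain ⟨i, hiN, hbad⟩ := htail ((Finset.range r).sup Nf)
          obtain ⟨s, hs, L, hff, hle, hiso'⟩ := hbad' i hbad
          have h1 : Nf s ≤ i :=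
            le_trans (Finset.le_sup (Finset.mem_range.mpr hs)) hiN
          have h1' : (hcon s hs).choose ≤ i := by
            simpa only [hNf, dif_pos hs] using h1
          exact (not_nonempty_iff.mpr ((hcon s hs).choose_spec i h1' L hff hle)) hiso'
        obtain ⟨s, hsr, hfreq'⟩ := hfreq
        obtain ⟨f, hfmono, hfBad⟩ := exists_strictMono_natRC hfreq'
        choose L hff hle hLiso using hfBad
        have hMle : ∀ k, L k ≤ H (f k + 1) := fun k => (hff k).le'
        have hLchain : ∀ k, L k ≤ L (k + 1) := fun k =>
          le_trans (hMle k) (le_trans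
            (hmono (Nat.succ_le_of_lt (hfmono (Nat.lt_succ_self k)))) (hle (k + 1)))
        obtain ⟨r', hr', K, hK1, hK2, hK3, hK4⟩ := IH s hsr L hLchain hLiso
        refine ⟨r', le_trans hr' (le_of_lt hsr), K, hK1, hK2, hK3, ?_⟩
        have hLnostab : ¬ ∃ N, ∀ j, N ≤ j → L j = L N := by
          rintro ⟨N, hNL⟩
          apply hstab
          refine ⟨f N + 1, fun i hi => le_antisymm ?_ (hmono hi)⟩
          have h1 : i ≤ f (max N i) :=
            le_trans (le_max_right N i) hfmono.le_apply
          calc H i ≤ H (f (max N i)) := hmono h1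
            _ ≤ L (max N i) := hle (max N i)
            _ = L N := hNL (max N i) (le_max_left N i)
            _ ≤ H (f N + 1) := hMle N
        constructor
        · intro h; exact absurd h hstab
        · intro hK; exact absurd (hK4.mpr hK) hLnostab

end AuxRCNPFF

/-- Any ascending chain of free subgroups of constant rank `r` can be replaced by an
ascending chain of free subgroups of constant rank `r' ≤ r` in which no group is
contained in a proper free factor of the next, and which stabilizes iff the original
chain does. -/
theorem reduce_chain_to_no_proper_free_factor
    {G : Type*} [Group G] (r : ℕ) (H : ℕ → Subgroup G)
    (hchain : ∀ i, H i ≤ H (i + 1))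
    (hiso : ∀ i, Nonempty (H i ≃* FreeGroup (Fin r))) :
    ∃ (r' : ℕ), r' ≤ r ∧ ∃ K : ℕ → Subgroup G,
      (∀ i, K i ≤ K (i + 1)) ∧
      (∀ i, Nonempty (K i ≃* FreeGroup (Fin r'))) ∧
      (∀ i, ¬ ∃ L : Subgroup G, IsFreeFactorOf L (K (i + 1)) ∧ L ≠ K (i + 1) ∧ K i ≤ L) ∧
      ((∃ N, ∀ i, N ≤ i → H i = H N) ↔ (∃ N, ∀ i, N ≤ i → K i = K N)) := by
  exact reduce_chain_auxRC r H hchain hiso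
end

section
/- For every δ ≥ 0, K ≥ 1 and C ≥ 0 there exist L > 0, K' ≥ 1 and C' ≥ 0 such that the following holds: if (X,d) is a geodesic metric space that is δ-hyperbolic, then every L-local (K,C)-quasi-geodesic γ : [a,b] → X is a (K',C')-quasi-geodesic. -/
/-- Gromov's four-point condition for a distance function: `(X, d)` is `δ`-hyperbolic. -/
def IsHyperbolic {X : Type*} (d : X → X → ℝ) (δ : ℝ) : Prop :=
  ∀ x y z w : X, d x y + d z w ≤ max (d x z + d y w) (d x w + d y z) + 2 * δ

/-- A geodesic metric space: any two points are joined by a geodesic segment. -/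
def IsGeodesicSpace (X : Type*) [MetricSpace X] : Prop :=
  ∀ x y : X, ∃ γ : ℝ → X, γ 0 = x ∧ γ (dist x y) = y ∧
    ∀ s t : ℝ, s ∈ Set.Icc (0 : ℝ) (dist x y) → t ∈ Set.Icc (0 : ℝ) (dist x y) →
      dist (γ s) (γ t) = |s - t|

set_option maxHeartbeats 4000000

namespace LTG

open Set

/-- The Gromov product of `x` and `y` seen from `p`. -/
noncomputable def gp {X : Type} [MetricSpace X] (p x y : X) : ℝ :=
  (dist p x + dist p y - dist x y) / 2

variable {X : Type} [MetricSpace X]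

lemma gp_nonneg (p x y : X) : 0 ≤ gp p x y := by
  have h := dist_triangle x p y
  have h2 : dist x p = dist p x := dist_comm x p
  unfold gp; linarith

lemma gp_comm (p x y : X) : gp p x y = gp p y x := by
  unfold gp; rw [dist_comm x y]; ring

lemma dist_eq_gp (p x y : X) : dist x y = dist x p + dist p y - 2 * gp p x y := by
  unfold gp; rw [dist_comm x p]; ring

lemma gp_add (x p q : X) : gp p x q + gp q x p = dist p q := by
  unfold gp; rw [dist_comm q x, dist_comm q p, dist_comm x p]; ring

lemma gp_le_gp_add_dist (p q x y : X) : gp p x y ≤ gp q x y + dist p q := by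
  have h1 := dist_triangle p q x
  have h2 := dist_triangle p q y
  unfold gp; linarith

lemma gp_eq_zero_of_between {x q y : X} (h : dist x q + dist q y = dist x y) :
    gp q x y = 0 := by
  have h2 : dist q x = dist x q := dist_comm q x
  unfold gp; linarith

lemma gp_min {δ : ℝ} (hH : IsHyperbolic (fun x y : X => dist x y) δ) (p x y z : X) :
    min (gp p x y) (gp p y z) ≤ gp p x z + δ := by
  have h : dist p y + dist x z ≤ max (dist p x + dist y z) (dist p z + dist y x) + 2 * δ :=
    hH p y x z
  have hc : dist y x = dist x y := dist_comm y x
  rw [min_le_iff]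
  rcases le_total (dist p x + dist y z) (dist p z + dist y x) with hm | hm
  · rw [max_eq_right hm] at h
    left; unfold gp; linarith
  · rw [max_eq_left hm] at h
    right; unfold gp; linarith

/-- Lemma A: there is a point `q` between `x` and `y` with `dist w q ≤ (x|y)_w + 2δ`. -/
lemma lemA {δ : ℝ} (hG : IsGeodesicSpace X)
    (hH : IsHyperbolic (fun x y : X => dist x y) δ) (x y w : X) :
    ∃ q : X, dist x q + dist q y = dist x y ∧ dist w q ≤ gp w x y + 2 * δ := by
  obtain ⟨g, hg0, hg1, hiso⟩ := hG x y
  set D := dist x y with hD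
  have hD0 : 0 ≤ D := dist_nonneg
  set s := (dist w x - dist w y + D) / 2 with hs
  have hs0 : 0 ≤ s := by
    have h := dist_triangle w x y
    rw [← hD] at h
    simp only [hs]; linarith
  have hsD : s ≤ D := by
    have h := dist_triangle w y x
    have h2 : dist y x = dist x y := dist_comm y x
    rw [h2, ← hD] at h
    simp only [hs]; linarith
  have hmem0 : (0:ℝ) ∈ Icc (0:ℝ) D := ⟨le_refl 0, hD0⟩
  have hmems : s ∈ Icc (0:ℝ) D := ⟨hs0, hsD⟩
  have hmemD : D ∈ Icc (0:ℝ) D := ⟨hD0, le_refl D⟩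
  have hxq : dist x (g s) = s := by
    have h := hiso 0 s hmem0 hmems
    rw [hg0] at h
    rw [h, zero_sub, abs_neg, abs_of_nonneg hs0]
  have hqy : dist (g s) y = D - s := by
    have h := hiso s D hmems hmemD
    rw [hg1] at h
    rw [h, abs_of_nonpos (by linarith)]; ring
  have h4 : dist w (g s) + dist x y ≤
      max (dist w x + dist (g s) y) (dist w y + dist (g s) x) + 2 * δ := hH w (g s) x y
  have hqx : dist (g s) x = s := by rw [dist_comm]; exact hxq
  have hb1 : dist w x + dist (g s) y = (dist w x + dist w y + D) / 2 := by
    rw [hqy]; simp only [hs]; ring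
  have hb2 : dist w y + dist (g s) x = (dist w x + dist w y + D) / 2 := by
    rw [hqx]; simp only [hs]; ring
  rw [hb1, hb2, max_self, ← hD] at h4
  refine ⟨g s, by rw [hxq, hqy]; ring, ?_⟩
  unfold gp
  rw [← hD]
  linarith

lemma nat_sq_le_two_pow {n : ℕ} (hn : 4 ≤ n) : n ^ 2 ≤ 2 ^ n := by
  induction n with
  | zero => omega
  | succ m ih =>
    rcases Nat.lt_or_ge m 4 with h | h
    · have hm : m = 3 := by omega
      subst hm; norm_num
    · have h2 := ih h
      have h3 : (m + 1) ^ 2 ≤ 2 * m ^ 2 := by nlinarith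
      calc (m + 1) ^ 2 ≤ 2 * m ^ 2 := h3
        _ ≤ 2 * 2 ^ m := by omega
        _ = 2 ^ (m + 1) := by ring

lemma exists_pow_ge (A B : ℝ) (hA : 0 ≤ A) (hB : 0 ≤ B) :
    ∃ k : ℕ, A * k + B ≤ 2 ^ k := by
  refine ⟨⌈A + B⌉₊ + 4, ?_⟩
  set n : ℕ := ⌈A + B⌉₊ + 4 with hn
  have h1 : A + B ≤ n := by
    calc A + B ≤ (⌈A + B⌉₊ : ℝ) := Nat.le_ceil _
      _ ≤ n := by rw [hn]; push_cast; linarith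
  have h2 : ((n : ℝ)) ^ 2 ≤ 2 ^ n := by
    have h := nat_sq_le_two_pow (show 4 ≤ n by omega)
    exact_mod_cast h
  have hn1 : (1:ℝ) ≤ n := by
    have : (1:ℕ) ≤ n := by omega
    exact_mod_cast this
  calc A * n + B ≤ A * n + B * n := by nlinarith
    _ = (A + B) * n := by ring
    _ ≤ n * n := mul_le_mul_of_nonneg_right h1 (by linarith)
    _ = (n : ℝ) ^ 2 := by ring
    _ ≤ 2 ^ n := h2


/-- Lemma C: a point between the endpoints of a chain of at most `2^k` steps of size
at most `r` lies within `3δk + r` of the chain. -/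
lemma lemC {δ : ℝ} (hδ : 0 ≤ δ) (hG : IsGeodesicSpace X)
    (hH : IsHyperbolic (fun x y : X => dist x y) δ) (r : ℝ) :
    ∀ k N : ℕ, 1 ≤ N → N ≤ 2 ^ k → ∀ z : ℕ → X,
      (∀ i, i < N → dist (z i) (z (i + 1)) ≤ r) →
      ∀ p : X, dist (z 0) p + dist p (z N) = dist (z 0) (z N) →
      ∃ i, i ≤ N ∧ dist p (z i) ≤ 3 * δ * k + r := by
  intro k
  induction k with
  | zero =>
    intro N hN1 hN2 z hz p hp
    have hN : N = 1 := by omega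
    subst hN
    have hr := hz 0 (by omega)
    have hr0 : (0:ℝ) ≤ r := le_trans dist_nonneg hr
    have hsum : dist (z 0) p + dist p (z 1) ≤ r := by rw [hp]; exact hr
    rcases le_total (dist p (z 0)) (dist p (z 1)) with hc | hc
    · refine ⟨0, by omega, ?_⟩
      have h2 : dist (z 0) p = dist p (z 0) := dist_comm _ _
      push_cast; linarith [dist_nonneg (x := p) (y := (z 1))]
    · refine ⟨1, by omega, ?_⟩
      have h2 : dist (z 0) p = dist p (z 0) := dist_comm _ _
      push_cast; linarith [dist_nonneg (x := p) (y := (z 0))]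
  | succ k ih =>
    intro N hN1 hN2 z hz p hp
    by_cases hN : N = 1
    · subst hN
      have hr := hz 0 (by omega)
      have hr0 : (0:ℝ) ≤ r := le_trans dist_nonneg hr
      have hsum : dist (z 0) p + dist p (z 1) ≤ r := by rw [hp]; exact hr
      have hk0 : (0:ℝ) ≤ 3 * δ * (k + 1 : ℕ) := by
        have h := mul_nonneg hδ (Nat.cast_nonneg (α := ℝ) (k + 1))
        linarith
      rcases le_total (dist p (z 0)) (dist p (z 1)) with hc | hc
      · refine ⟨0, by omega, ?_⟩
        have h2 : dist (z 0) p = dist p (z 0) := dist_comm _ _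
        linarith [dist_nonneg (x := p) (y := (z 1))]
      · refine ⟨1, by omega, ?_⟩
        have h2 : dist (z 0) p = dist p (z 0) := dist_comm _ _
        linarith [dist_nonneg (x := p) (y := (z 0))]
    · have hN2' : 2 ≤ N := by omega
      have hpow : (2:ℕ) ^ (k + 1) = 2 * 2 ^ k := by ring
      rw [hpow] at hN2
      set m := (N + 1) / 2 with hm
      have hm1 : 1 ≤ m := by omega
      have hmN : m < N := by omega
      have hm2 : m ≤ 2 ^ k := by omega
      have hNm2 : N - m ≤ 2 ^ k := by omega
      have hNm1 : 1 ≤ N - m := by omega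
      have h0 : gp p (z 0) (z N) = 0 := by
        apply gp_eq_zero_of_between; exact hp
      have hmin := gp_min hH p (z 0) (z m) (z N)
      rw [h0] at hmin
      rcases le_total (gp p (z 0) (z m)) (gp p (z m) (z N)) with hc | hc
      · rw [min_eq_left hc] at hmin
        obtain ⟨q, hq1, hq2⟩ := lemA hG hH (z 0) (z m) p
        obtain ⟨i, hi, hqi⟩ := ih m hm1 hm2 z (fun i hi => hz i (by omega)) q hq1
        refine ⟨i, by omega, ?_⟩
        have ht := dist_triangle p q (z i)
        push_cast
        have : dist p q ≤ 3 * δ := by linarith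
        push_cast at hqi
        linarith
      · rw [min_eq_right hc] at hmin
        obtain ⟨q, hq1, hq2⟩ := lemA hG hH (z m) (z N) p
        have hmN' : m + (N - m) = N := by omega
        obtain ⟨i, hi, hqi⟩ := ih (N - m) hNm1 hNm2 (fun i => z (m + i))
          (fun i hi => hz (m + i) (by omega)) q (by simpa [hmN'] using hq1)
        refine ⟨m + i, by omega, ?_⟩
        have ht := dist_triangle p q (z (m + i))
        push_cast
        have : dist p q ≤ 3 * δ := by linarith
        push_cast at hqi
        linarith


/-- Lemma M: within a window of parameter length at most `L`, every point of the
quasi-geodesic is within `R'` of some point lying between the window endpoints. -/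
lemma lemM {δ : ℝ} (hδ : 0 ≤ δ) (hG : IsGeodesicSpace X)
    (hH : IsHyperbolic (fun x y : X => dist x y) δ)
    {K C L : ℝ} (hK : 1 ≤ K) (hC : 0 ≤ C) (hL1 : 1 ≤ L)
    {a b : ℝ} {γ : ℝ → X}
    (hγ : ∀ s t : ℝ, s ∈ Icc a b → t ∈ Icc a b → |s - t| ≤ L →
      (1 / K) * |s - t| - C ≤ dist (γ s) (γ t) ∧ dist (γ s) (γ t) ≤ K * |s - t| + C)
    {k₀ : ℕ} (hLk : L ≤ 2 ^ k₀)
    {R₀ M R' : ℝ}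
    (hR₀ : R₀ = 3 * δ * k₀ + K + C)
    (hM : M = K * (2 * R₀ + 1 + C))
    (hR' : R' = K * M + C + R₀)
    (hML : M ≤ L)
    {u v w : ℝ} (hau : a ≤ u) (hvb : v ≤ b) (huw : u ≤ w) (hwv : w ≤ v)
    (hvu : v - u ≤ L) :
    ∃ q : X, dist (γ u) q + dist q (γ v) = dist (γ u) (γ v) ∧ dist (γ w) q ≤ R' := by
  classical
  have hK0 : (0:ℝ) < K := lt_of_lt_of_le one_pos hK
  have huv : u ≤ v := le_trans huw hwv
  have hk0R : (0:ℝ) ≤ (k₀ : ℝ) := Nat.cast_nonneg _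
  have hK0' : (0:ℝ) ≤ K := le_of_lt hK0
  have hR₀0 : 0 ≤ R₀ := by
    rw [hR₀]
    have h := mul_nonneg (mul_nonneg (by norm_num : (0:ℝ) ≤ 3) hδ) hk0R
    linarith
  have hM0 : 0 ≤ M := by
    rw [hM]
    have h := mul_nonneg hK0' (by linarith : (0:ℝ) ≤ 2 * R₀ + 1 + C)
    linarith
  have hR'0 : 0 ≤ R' := by
    rw [hR']
    have h := mul_nonneg hK0' hM0
    linarith
  have hmemab : ∀ x : ℝ, x ∈ Icc u v → x ∈ Icc a b :=
    fun x hx => ⟨le_trans hau hx.1, le_trans hx.2 hvb⟩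
  have hwab : w ∈ Icc a b := ⟨le_trans hau huw, le_trans hwv hvb⟩
  obtain ⟨g, hg0, hgD, hiso⟩ := hG (γ u) (γ v)
  set D := dist (γ u) (γ v) with hDdef
  have hD0 : 0 ≤ D := dist_nonneg
  set J : ℕ := ⌈D⌉₊ + 1 with hJdef
  have hJ0 : (0:ℝ) < J := by
    have : (1:ℕ) ≤ J := by omega
    have h2 : (1:ℝ) ≤ (J:ℝ) := by exact_mod_cast this
    linarith
  have hDJ : D ≤ J := by
    calc D ≤ (⌈D⌉₊ : ℝ) := Nat.le_ceil D
      _ ≤ J := by rw [hJdef]; push_cast; linarith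
  have he : D / J ≤ 1 := by rw [div_le_one hJ0]; exact hDJ
  have he0 : 0 ≤ D / J := by positivity
  set p : ℕ → X := fun j => g (j * (D / J)) with hpdef
  have hparam : ∀ j : ℕ, j ≤ J → (j:ℝ) * (D / J) ∈ Icc (0:ℝ) D := by
    intro j hj
    constructor
    · positivity
    · have hjJ : (j:ℝ) ≤ J := Nat.cast_le.mpr hj
      calc (j:ℝ) * (D / J) ≤ J * (D / J) := mul_le_mul_of_nonneg_right hjJ he0
        _ = D := by field_simp
  have hbetw : ∀ j : ℕ, j ≤ J →
      dist (γ u) (p j) = j * (D / J) ∧ dist (p j) (γ v) = D - j * (D / J) := by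
    intro j hj
    constructor
    · have h := hiso 0 ((j:ℝ) * (D / J)) ⟨le_refl _, hD0⟩ (hparam j hj)
      rw [hg0] at h
      simp only [hpdef]
      rw [h, zero_sub, abs_neg, abs_of_nonneg (hparam j hj).1]
    · have h := hiso ((j:ℝ) * (D / J)) D (hparam j hj) ⟨hD0, le_refl _⟩
      rw [hgD] at h
      simp only [hpdef]
      rw [h, abs_of_nonpos (by linarith [(hparam j hj).2])]; ring
  have hpstep : ∀ j : ℕ, j < J → dist (p j) (p (j + 1)) ≤ 1 := by
    intro j hj
    have h := hiso ((j:ℝ) * (D / J)) (((j:ℕ)+1 : ℕ) * (D / J))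
      (hparam j (le_of_lt hj)) (hparam (j+1) hj)
    simp only [hpdef]
    have hd : (j:ℝ) * (D / J) - ((j:ℕ)+1 : ℕ) * (D / J) = -(D / J) := by push_cast; ring
    rw [h, hd, abs_neg, abs_of_nonneg he0]
    exact he
  -- the chain of sample points
  set Nc : ℕ := 2 ^ k₀ with hNcdef
  have hNcR : (Nc : ℝ) = 2 ^ k₀ := by rw [hNcdef]; push_cast; ring
  have hNc0 : (0:ℝ) < Nc := by rw [hNcR]; positivity
  set e := (v - u) / Nc with hedef
  have hvu0 : 0 ≤ v - u := by linarith
  have he0' : 0 ≤ e := by positivity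
  have he1' : e ≤ 1 := by
    rw [hedef, div_le_one hNc0, hNcR]
    linarith
  set z : ℕ → X := fun i => γ (u + i * e) with hzdef
  have hzmem : ∀ i : ℕ, i ≤ Nc → u + i * e ∈ Icc u v := by
    intro i hi
    constructor
    · have h := mul_nonneg (Nat.cast_nonneg (α := ℝ) i) he0'
      linarith
    · have hiN : (i:ℝ) ≤ Nc := Nat.cast_le.mpr hi
      have : (i:ℝ) * e ≤ Nc * e := mul_le_mul_of_nonneg_right hiN he0'
      have hNe : (Nc:ℝ) * e = v - u := by
        rw [hedef]; field_simp
      linarith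
  have hz0 : z 0 = γ u := by simp [hzdef]
  have hzN : z Nc = γ v := by
    simp only [hzdef]
    congr 1
    have : (Nc:ℝ) * e = v - u := by rw [hedef]; field_simp
    linarith
  have hzstep : ∀ i : ℕ, i < Nc → dist (z i) (z (i + 1)) ≤ K + C := by
    intro i hi
    have h1 := hmemab _ (hzmem i (le_of_lt hi))
    have h2 := hmemab _ (hzmem (i+1) hi)
    have hd : (u + (i:ℕ) * e) - (u + ((i:ℕ)+1 : ℕ) * e) = -e := by push_cast; ring
    have habs : |(u + (i:ℕ) * e) - (u + ((i:ℕ)+1 : ℕ) * e)| ≤ L := by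
      rw [hd, abs_neg, abs_of_nonneg he0']; linarith
    have hb := (hγ _ _ h1 h2 habs).2
    simp only [hzdef]
    rw [hd, abs_neg, abs_of_nonneg he0'] at hb
    have h := mul_le_mul_of_nonneg_left he1' hK0'
    linarith
  have hlemC : ∀ j : ℕ, j ≤ J → ∃ xr : ℝ, xr ∈ Icc u v ∧ dist (p j) (γ xr) ≤ R₀ := by
    intro j hj
    have hbp := hbetw j hj
    have hb : dist (z 0) (p j) + dist (p j) (z Nc) = dist (z 0) (z Nc) := by
      rw [hz0, hzN, hbp.1, hbp.2, ← hDdef]; ring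
    obtain ⟨i, hiN, hdi⟩ := lemC hδ hG hH (K + C) k₀ Nc
      (by rw [hNcdef]; exact Nat.one_le_two_pow) (by rw [hNcdef])
      z hzstep (p j) hb
    refine ⟨u + i * e, hzmem i hiN, ?_⟩
    rw [hR₀]
    simp only [hzdef] at hdi
    linarith
  have hφex : ∀ j : ℕ, ∃ xr : ℝ, xr ∈ Icc u v ∧ (j ≤ J → dist (p j) (γ xr) ≤ R₀) := by
    intro j
    by_cases hj : j ≤ J
    · obtain ⟨xr, h1, h2⟩ := hlemC j hj; exact ⟨xr, h1, fun _ => h2⟩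
    · exact ⟨u, ⟨le_refl u, huv⟩, fun h => absurd h hj⟩
  choose φ hφIcc hφR using hφex
  set φ' : ℕ → ℝ := fun j => if j = 0 then u else if J ≤ j then v else φ j with hφ'def
  have hφ'Icc : ∀ j, φ' j ∈ Icc u v := by
    intro j
    simp only [hφ'def]
    split_ifs
    · exact ⟨le_refl u, huv⟩
    · exact ⟨huv, le_refl v⟩
    · exact hφIcc j
  have hp0 : p 0 = γ u := by
    simp only [hpdef]
    norm_num
    exact hg0
  have hpJ : p J = γ v := by
    simp only [hpdef]
    have hJD : (J:ℝ) * (D / J) = D := by field_simp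
    rw [hJD, hgD]
  have hφ'R : ∀ j, j ≤ J → dist (p j) (γ (φ' j)) ≤ R₀ := by
    intro j hj
    simp only [hφ'def]
    split_ifs with h1 h2
    · subst h1; rw [hp0, dist_self]; exact hR₀0
    · have hjJ : j = J := le_antisymm hj h2
      subst hjJ; rw [hpJ, dist_self]; exact hR₀0
    · exact hφR j hj
  have hjump : ∀ j, j < J → φ' (j + 1) - φ' j ≤ M := by
    intro j hj
    have h1 := hφ'R j (le_of_lt hj)
    have h2 := hφ'R (j + 1) hj
    have h3 := hpstep j hj
    have hIcc1 := hφ'Icc j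
    have hIcc2 := hφ'Icc (j + 1)
    have hdd : dist (γ (φ' j)) (γ (φ' (j + 1))) ≤ 2 * R₀ + 1 := by
      calc dist (γ (φ' j)) (γ (φ' (j + 1)))
          ≤ dist (γ (φ' j)) (p j) + dist (p j) (p (j + 1)) + dist (p (j + 1)) (γ (φ' (j + 1))) :=
            dist_triangle4 _ _ _ _
        _ ≤ R₀ + 1 + R₀ := by
            have hcm : dist (γ (φ' j)) (p j) = dist (p j) (γ (φ' j)) := dist_comm _ _
            rw [hcm]
            exact add_le_add (add_le_add h1 h3) h2
        _ = 2 * R₀ + 1 := by ring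
    have habs : |φ' j - φ' (j + 1)| ≤ L := by
      rw [abs_le]
      constructor
      · linarith [hIcc1.1, hIcc2.2]
      · linarith [hIcc1.2, hIcc2.1]
    have hlow := (hγ (φ' j) (φ' (j + 1)) (hmemab _ hIcc1) (hmemab _ hIcc2) habs).1
    have e1 : (1 / K) * |φ' j - φ' (j + 1)| ≤ 2 * R₀ + 1 + C := by linarith
    have e2 : |φ' j - φ' (j + 1)| ≤ K * (2 * R₀ + 1 + C) := by
      have e3 : |φ' j - φ' (j + 1)| = K * ((1 / K) * |φ' j - φ' (j + 1)|) := by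
        field_simp
      rw [e3]
      exact mul_le_mul_of_nonneg_left e1 (le_of_lt hK0)
    have e4 : φ' (j + 1) - φ' j ≤ |φ' j - φ' (j + 1)| := by
      rw [abs_sub_comm]
      exact le_abs_self _
    rw [hM]
    linarith
  -- coarse intermediate value argument
  set T := (Finset.range (J + 1)).filter (fun j => φ' j ≤ w) with hT
  have hT0 : 0 ∈ T := by
    rw [hT]
    refine Finset.mem_filter.mpr ⟨Finset.mem_range.mpr (by omega), ?_⟩
    show (if (0:ℕ) = 0 then u else if J ≤ 0 then v else φ 0) ≤ w
    rw [if_pos rfl]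
    exact huw
  have hTne : T.Nonempty := ⟨0, hT0⟩
  set j₀ := T.max' hTne with hj₀def
  have hj₀T : j₀ ∈ T := Finset.max'_mem _ _
  have hj₀J : j₀ ≤ J := by
    have h := (Finset.mem_filter.mp hj₀T).1
    rw [Finset.mem_range] at h
    omega
  have hφj₀ : φ' j₀ ≤ w := (Finset.mem_filter.mp hj₀T).2
  rcases eq_or_lt_of_le hj₀J with hEq | hLt
  · -- top of the range: w = v
    have hJ1 : J ≠ 0 := by omega
    have hφJ : φ' J = v := by
      simp only [hφ'def]
      rw [if_neg hJ1, if_pos (le_refl J)]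
    have hwv' : w = v := by
      apply le_antisymm hwv
      rw [hEq, hφJ] at hφj₀
      exact hφj₀
    refine ⟨γ v, by rw [dist_self]; ring, ?_⟩
    rw [hwv', dist_self]
    exact hR'0
  · have hnot : ¬ (φ' (j₀ + 1) ≤ w) := by
      intro hcon
      have hmem : j₀ + 1 ∈ T := by
        rw [hT]
        exact Finset.mem_filter.mpr ⟨Finset.mem_range.mpr (by omega), hcon⟩
      have := Finset.le_max' T _ hmem
      rw [← hj₀def] at this
      omega
    push_neg at hnot
    have hj1 := hjump j₀ hLt
    have hwd : |w - φ' j₀| ≤ M := by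
      rw [abs_of_nonneg (by linarith)]
      linarith
    have hwL : |w - φ' j₀| ≤ L := le_trans hwd hML
    have hup := (hγ w (φ' j₀) hwab (hmemab _ (hφ'Icc j₀)) hwL).2
    have hbp := hbetw j₀ hj₀J
    refine ⟨p j₀, by rw [hbp.1, hbp.2]; ring, ?_⟩
    calc dist (γ w) (p j₀) ≤ dist (γ w) (γ (φ' j₀)) + dist (γ (φ' j₀)) (p j₀) :=
          dist_triangle _ _ _
      _ ≤ (K * M + C) + R₀ := by
          have hc1 : dist (γ w) (γ (φ' j₀)) ≤ K * M + C := by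
            have := mul_le_mul_of_nonneg_left hwd (le_of_lt hK0)
            linarith
          have hc2 : dist (γ (φ' j₀)) (p j₀) ≤ R₀ := by
            rw [dist_comm]
            exact hφ'R j₀ hj₀J
          linarith
      _ = R' := by rw [hR']

end LTG

open LTG Set

/-- Local-to-global principle for quasi-geodesics in hyperbolic geodesic metric spaces:
for all `δ, K, C` there exist `L, K', C'` such that in any `δ`-hyperbolic geodesic metric
space, every `L`-local `(K, C)`-quasi-geodesic `γ : [a, b] → X` is a `(K', C')`-quasi-geodesic. -/
theorem local_to_global_quasigeodesics
    (δ K C : ℝ) (hδ : 0 ≤ δ) (hK : 1 ≤ K) (hC : 0 ≤ C) :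
    ∃ L K' C' : ℝ, 0 < L ∧ 1 ≤ K' ∧ 0 ≤ C' ∧
      ∀ (X : Type) [MetricSpace X], IsGeodesicSpace X →
        IsHyperbolic (fun x y : X => dist x y) δ →
        ∀ (a b : ℝ) (γ : ℝ → X),
          (∀ s t : ℝ, s ∈ Set.Icc a b → t ∈ Set.Icc a b → |s - t| ≤ L →
            (1 / K) * |s - t| - C ≤ dist (γ s) (γ t) ∧ dist (γ s) (γ t) ≤ K * |s - t| + C) →
          ∀ s t : ℝ, s ∈ Set.Icc a b → t ∈ Set.Icc a b →
            (1 / K') * |s - t| - C' ≤ dist (γ s) (γ t) ∧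
              dist (γ s) (γ t) ≤ K' * |s - t| + C' := by
  classical
  have hK0 : (0:ℝ) < K := lt_of_lt_of_le one_pos hK
  have hK0' : (0:ℝ) ≤ K := le_of_lt hK0
  -- the length of the window as an (affine) function of the dyadic depth k
  set f : ℕ → ℝ := fun k =>
    2 * (K * (C + 2 * (K * (K * (2 * (3 * δ * k + K + C) + 1 + C)) + C +
      (3 * δ * k + K + C)) + 2 * δ + 1)) with hf
  have haff : ∀ k : ℕ, f k = f 0 + (f 1 - f 0) * k := by
    intro k; simp only [hf]; push_cast; ring
  have hA : 0 ≤ f 1 - f 0 := by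
    simp only [hf]; push_cast
    linarith [mul_nonneg (mul_nonneg (mul_nonneg hK0' hK0') hK0') hδ,
      mul_nonneg hK0' hδ]
  have hB : 0 ≤ f 0 := by
    simp only [hf]; push_cast
    linarith [mul_nonneg hK0' hC, mul_nonneg hK0' hδ,
      mul_nonneg (mul_nonneg (mul_nonneg hK0' hK0') hK0') hK0',
      mul_nonneg (mul_nonneg (mul_nonneg hK0' hK0') hK0') hC,
      mul_nonneg (mul_nonneg hK0' hK0') hK0', mul_nonneg hK0' hK0',
      mul_nonneg (mul_nonneg hK0' hK0') hC]
  obtain ⟨k₀, hk₀⟩ := exists_pow_ge (f 1 - f 0) (f 0) hA hB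
  have hk0R : (0:ℝ) ≤ (k₀:ℝ) := Nat.cast_nonneg _
  set R₀ : ℝ := 3 * δ * k₀ + K + C with hR₀
  set M : ℝ := K * (2 * R₀ + 1 + C) with hM
  set R' : ℝ := K * M + C + R₀ with hR'
  set Δ : ℝ := K * (C + 2 * R' + 2 * δ + 1) with hΔ
  set L : ℝ := 2 * Δ with hL
  have hLf : L = f k₀ := by simp only [hL, hΔ, hR', hM, hR₀, hf]
  have hL2 : L ≤ 2 ^ k₀ := by rw [hLf, haff k₀]; linarith
  -- basic estimates on the constants
  have hR₀1 : 1 ≤ R₀ := by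
    rw [hR₀]
    linarith [mul_nonneg (mul_nonneg (by norm_num : (0:ℝ) ≤ 3) hδ) hk0R]
  have hR₀0 : 0 ≤ R₀ := by linarith
  have hM1 : 1 ≤ M := by
    rw [hM]
    linarith [mul_nonneg (sub_nonneg.mpr hK) (by linarith : (0:ℝ) ≤ 2 * R₀ + 1 + C)]
  have hM0 : 0 ≤ M := by linarith
  have hR'1 : 1 ≤ R' := by
    rw [hR']
    linarith [mul_nonneg hK0' hM0]
  have hR'0 : 0 ≤ R' := by linarith
  have hMR' : M ≤ R' := by
    rw [hR']
    linarith [mul_nonneg (sub_nonneg.mpr hK) hM0]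
  have hΔR' : R' ≤ Δ := by
    rw [hΔ]
    linarith [mul_nonneg (sub_nonneg.mpr hK) (by linarith : (0:ℝ) ≤ C + 2 * R' + 2 * δ + 1)]
  have hΔ1 : 1 ≤ Δ := by linarith
  have hΔpos : (0:ℝ) < Δ := by linarith
  have hΔL : Δ ≤ L := by rw [hL]; linarith
  have hML : M ≤ L := by linarith
  have hL1 : 1 ≤ L := by linarith
  have hLpos : (0:ℝ) < L := by linarith
  set K' : ℝ := K + C + Δ with hK'
  set C' : ℝ := 1 + K * Δ + C with hC'
  have hK'1 : 1 ≤ K' := by rw [hK']; linarith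
  have hK'pos : (0:ℝ) < K' := by linarith
  have hC'0 : 0 ≤ C' := by rw [hC']; linarith [mul_nonneg hK0' (by linarith : (0:ℝ) ≤ Δ)]
  have hKK' : K ≤ K' := by rw [hK']; linarith
  have hCC' : C ≤ C' := by rw [hC']; linarith [mul_nonneg hK0' (by linarith : (0:ℝ) ≤ Δ)]
  have hΔK' : Δ ≤ K' := by rw [hK']; linarith
  have hΔKe : (1 / K) * Δ - C = 2 * R' + 2 * δ + 1 := by
    rw [hΔ]; field_simp; ring
  refine ⟨L, K', C', hLpos, hK'1, hC'0, ?_⟩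
  intro X instX hGeo hHyp a b γ hγ
  have key : ∀ s t : ℝ, s ∈ Icc a b → t ∈ Icc a b → s ≤ t →
      (1 / K') * (t - s) - C' ≤ dist (γ s) (γ t) ∧
        dist (γ s) (γ t) ≤ K' * (t - s) + C' := by
    intro s t hs ht hst
    have hts0 : (0:ℝ) ≤ t - s := by linarith
    rcases le_or_gt (t - s) L with hcase | hcase
    · -- short case: directly from the local hypothesis
      have habs : |s - t| = t - s := by rw [abs_sub_comm, abs_of_nonneg hts0]
      have hb := hγ s t hs ht (by rw [habs]; exact hcase)
      rw [habs] at hb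
      constructor
      · have h1 : (1 / K') * (t - s) ≤ (1 / K) * (t - s) :=
          mul_le_mul_of_nonneg_right (one_div_le_one_div_of_le hK0 hKK') hts0
        linarith [hb.1]
      · have h2 : K * (t - s) ≤ K' * (t - s) := mul_le_mul_of_nonneg_right hKK' hts0
        linarith [hb.2]
    · -- long case
      set n : ℕ := ⌊(t - s) / Δ⌋₊ with hn
      have hdiv2 : (2:ℝ) ≤ (t - s) / Δ := by
        rw [le_div_iff₀ hΔpos]; rw [hL] at hcase; linarith
      have hn2 : 2 ≤ n := by
        rw [hn]; exact Nat.le_floor (by exact_mod_cast hdiv2)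
      have hn1 : (n:ℝ) ≤ (t - s) / Δ := Nat.floor_le (by positivity)
      have hn3 : (t - s) / Δ < n + 1 := Nat.lt_floor_add_one _
      set tt : ℕ → ℝ := fun i => s + i * Δ with htt
      have hnΔ : (n:ℝ) * Δ ≤ t - s := by
        have h := mul_le_mul_of_nonneg_right hn1 (le_of_lt hΔpos)
        rwa [div_mul_cancel₀ _ (ne_of_gt hΔpos)] at h
      have htmem : ∀ j : ℕ, j ≤ n → tt j ∈ Icc a b ∧ tt j ≤ t := by
        intro j hj
        have hjn : (j:ℝ) ≤ n := Nat.cast_le.mpr hj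
        have h1 : (j:ℝ) * Δ ≤ (n:ℝ) * Δ := mul_le_mul_of_nonneg_right hjn (le_of_lt hΔpos)
        have h2 : tt j ≤ t := by simp only [htt]; linarith
        have h3 : s ≤ tt j := by
          have h4 : (0:ℝ) ≤ (j:ℝ) * Δ := mul_nonneg (Nat.cast_nonneg j) (le_of_lt hΔpos)
          simp only [htt]
          linarith
        exact ⟨⟨le_trans hs.1 h3, le_trans h2 ht.2⟩, h2⟩
      have hstep : ∀ i : ℕ, i < n →
          2 * R' + 2 * δ + 1 ≤ dist (γ (tt i)) (γ (tt (i+1))) ∧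
          dist (γ (tt i)) (γ (tt (i+1))) ≤ K * Δ + C := by
        intro i hi
        have h1 := (htmem i (by omega)).1
        have h2 := (htmem (i+1) (by omega)).1
        have hd : tt i - tt (i+1) = -Δ := by simp only [htt]; push_cast; ring
        have habs : |tt i - tt (i+1)| = Δ := by
          rw [hd, abs_neg, abs_of_nonneg (le_of_lt hΔpos)]
        have hb := hγ (tt i) (tt (i+1)) h1 h2 (by rw [habs]; exact hΔL)
        rw [habs] at hb
        exact ⟨by linarith [hb.1, hΔKe], hb.2⟩
      have hcorner : ∀ i : ℕ, i + 2 ≤ n →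
          gp (γ (tt (i+1))) (γ (tt i)) (γ (tt (i+2))) ≤ R' := by
        intro i hi
        have h0 := htmem i (by omega)
        have h2' := htmem (i+2) (by omega)
        have hti1 : tt i ≤ tt (i+1) := by
          simp only [htt]; push_cast; linarith [hΔpos]
        have hti2 : tt (i+1) ≤ tt (i+2) := by
          simp only [htt]; push_cast; linarith [hΔpos]
        have hvui : tt (i+2) - tt i ≤ L := by
          have hdd : tt (i+2) - tt i = 2 * Δ := by simp only [htt]; push_cast; ring
          rw [hdd, hL]
        obtain ⟨q, hq1, hq2⟩ := lemM hδ hGeo hHyp hK hC hL1 hγ hL2 hR₀ hM hR' hML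
          h0.1.1 (le_trans h2'.2 ht.2) hti1 hti2 hvui
        calc gp (γ (tt (i+1))) (γ (tt i)) (γ (tt (i+2)))
            ≤ gp q (γ (tt i)) (γ (tt (i+2))) + dist (γ (tt (i+1))) q :=
              gp_le_gp_add_dist _ _ _ _
          _ = dist (γ (tt (i+1))) q := by rw [gp_eq_zero_of_between hq1, zero_add]
          _ ≤ R' := hq2
      have claim : ∀ i : ℕ, 1 ≤ i → i ≤ n →
          ((i:ℝ) ≤ dist (γ (tt 0)) (γ (tt i)) ∧
           (i + 1 ≤ n → gp (γ (tt i)) (γ (tt 0)) (γ (tt (i+1))) ≤ R' + δ)) := by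
        intro i hi
        induction i, hi using Nat.le_induction with
        | base =>
          intro _
          constructor
          · have h := (hstep 0 (by omega)).1
            push_cast
            linarith
          · intro h2n
            have h := hcorner 0 (by omega)
            linarith
        | succ i hi ih =>
          intro hin
          obtain ⟨IH1, IH2⟩ := ih (by omega)
          have hgpi := IH2 (by omega)
          have hidd := dist_eq_gp (γ (tt i)) (γ (tt 0)) (γ (tt (i+1)))
          have hs1 := (hstep i (by omega)).1
          constructor
          · push_cast
            push_cast at IH1
            linarith
          · intro hi2n
            have hAdd := gp_add (γ (tt 0)) (γ (tt i)) (γ (tt (i+1)))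
            have hA' : R' + δ + 1 ≤ gp (γ (tt (i+1))) (γ (tt 0)) (γ (tt i)) := by linarith
            have hB' := hcorner i (by omega)
            have hmin := gp_min hHyp (γ (tt (i+1))) (γ (tt i)) (γ (tt 0)) (γ (tt (i+2)))
            have hcm : gp (γ (tt (i+1))) (γ (tt i)) (γ (tt 0)) =
                gp (γ (tt (i+1))) (γ (tt 0)) (γ (tt i)) := gp_comm _ _ _
            rw [hcm] at hmin
            by_cases hAB : gp (γ (tt (i+1))) (γ (tt 0)) (γ (tt i)) ≤
                gp (γ (tt (i+1))) (γ (tt 0)) (γ (tt (i+2)))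
            · rw [min_eq_left hAB] at hmin
              linarith
            · push_neg at hAB
              rw [min_eq_right (le_of_lt hAB)] at hmin
              linarith
      have hfin := (claim n (by omega) (le_refl n)).1
      have htt0 : tt 0 = s := by simp [htt]
      have httn : tt n ≤ t := (htmem n (le_refl n)).2
      have htn1 : t - tt n ≤ Δ := by
        have h5 : t - s < ((n:ℝ) + 1) * Δ := by
          rw [div_lt_iff₀ hΔpos] at hn3
          linarith
        have h6 : ((n:ℝ) + 1) * Δ = (n:ℝ) * Δ + Δ := by ring
        simp only [htt]
        linarith
      have habsn : |tt n - t| ≤ Δ := by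
        rw [abs_of_nonpos (by linarith)]
        linarith
      have hlast := (hγ (tt n) t (htmem n (le_refl n)).1 ht (le_trans habsn hΔL)).2
      have hlastb : dist (γ (tt n)) (γ t) ≤ K * Δ + C := by
        have h6 : K * |tt n - t| ≤ K * Δ := mul_le_mul_of_nonneg_left habsn hK0'
        linarith
      constructor
      · -- lower bound
        have htri : dist (γ (tt 0)) (γ (tt n)) ≤
            dist (γ (tt 0)) (γ t) + dist (γ t) (γ (tt n)) := dist_triangle _ _ _
        rw [htt0] at htri hfin
        have hcm2 : dist (γ t) (γ (tt n)) = dist (γ (tt n)) (γ t) := dist_comm _ _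
        have hlow : (n:ℝ) - (K * Δ + C) ≤ dist (γ s) (γ t) := by linarith
        have h7 : (1 / K') * (t - s) ≤ (1 / Δ) * (t - s) :=
          mul_le_mul_of_nonneg_right (one_div_le_one_div_of_le hΔpos hΔK') hts0
        have h8 : (1 / Δ) * (t - s) = (t - s) / Δ := by ring
        rw [hC']
        linarith [hn3]
      · -- upper bound
        have hchain : ∀ i : ℕ, i ≤ n → dist (γ s) (γ (tt i)) ≤ i * (K * Δ + C) := by
          intro i
          induction i with
          | zero =>
            intro _
            rw [htt0, dist_self]
            push_cast
            simp
          | succ i ih =>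
            intro hi
            have h1 := ih (by omega)
            have h2 := (hstep i (by omega)).2
            calc dist (γ s) (γ (tt (i+1)))
                ≤ dist (γ s) (γ (tt i)) + dist (γ (tt i)) (γ (tt (i+1))) :=
                  dist_triangle _ _ _
              _ ≤ i * (K * Δ + C) + (K * Δ + C) := add_le_add h1 h2
              _ = ((i:ℕ)+1 : ℕ) * (K * Δ + C) := by push_cast; ring
        have h9 := hchain n (le_refl n)
        have hKΔC0 : (0:ℝ) ≤ K * Δ + C :=
          add_nonneg (mul_nonneg hK0' (le_of_lt hΔpos)) hC
        have h10 : dist (γ s) (γ t) ≤ ((n:ℝ) + 1) * (K * Δ + C) := by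
          have htr := dist_triangle (γ s) (γ (tt n)) (γ t)
          have hid : ((n:ℝ) + 1) * (K * Δ + C) = n * (K * Δ + C) + (K * Δ + C) := by ring
          linarith
        have h11 : ((n:ℝ) + 1) * (K * Δ + C) ≤ ((t - s)/Δ + 1) * (K * Δ + C) :=
          mul_le_mul_of_nonneg_right (by linarith) hKΔC0
        have hexp : ((t - s)/Δ + 1) * (K * Δ + C) =
            K * (t - s) + ((t - s)/Δ) * C + K * Δ + C := by
          field_simp
          ring
        have hdivle : (t - s)/Δ ≤ (t - s) := div_le_self hts0 hΔ1
        have h12 : ((t - s)/Δ) * C ≤ (t - s) * C := mul_le_mul_of_nonneg_right hdivle hC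
        have hK'exp : K' * (t - s) = K * (t - s) + C * (t - s) + Δ * (t - s) := by
          rw [hK']; ring
        have hΔts : (0:ℝ) ≤ Δ * (t - s) := mul_nonneg (le_of_lt hΔpos) hts0
        have hmc : (t - s) * C = C * (t - s) := mul_comm _ _
        rw [hC']
        linarith [h10, h11, hexp, h12, hK'exp, hΔts, hmc]
  intro s t hs ht
  rcases le_total s t with h | h
  · have habs : |s - t| = t - s := by rw [abs_sub_comm, abs_of_nonneg (by linarith)]
    rw [habs]
    exact key s t hs ht h
  · have habs : |s - t| = s - t := abs_of_nonneg (by linarith)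
    rw [habs, dist_comm (γ s) (γ t)]
    exact key t s ht hs h
end

section
/- For every r ∈ ℕ there are, up to graph isomorphism, only finitely many finite connected simple graphs in which every vertex has degree at least 3 and whose first Betti number equals r; that is, there is a finite list of such graphs so that every finite connected simple graph with minimum degree at least 3 and first Betti number r is isomorphic to one in the list. -/
/-- Up to isomorphism there are only finitely many finite connected simple graphs with
minimum degree at least 3 and first Betti number `r` (i.e. `|E| - |V| + 1 = r`): there is
a finite list of graphs such that every such graph is isomorphic to one in the list. -/
theorem finitely_many_graphs_of_min_degree_three (r : ℕ) :
    ∃ (k : ℕ) (n : Fin k → ℕ) (Γs : ∀ i : Fin k, SimpleGraph (Fin (n i))),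
      ∀ (V : Type) [Fintype V] (Γ : SimpleGraph V) [DecidableRel Γ.Adj],
        Γ.Connected → (∀ v : V, 3 ≤ Γ.degree v) →
        Γ.edgeFinset.card + 1 = Fintype.card V + r →
        ∃ i : Fin k, Nonempty (Γ ≃g Γs i) := by
  classical
  set N : ℕ := 2 * r + 1 with hN
  let e : Fin (Fintype.card (Σ m : Fin (N + 1), SimpleGraph (Fin m.1))) ≃
      (Σ m : Fin (N + 1), SimpleGraph (Fin m.1)) := (Fintype.equivFin _).symm
  refine ⟨_, fun i => ((e i).1 : ℕ), fun i => (e i).2, ?_⟩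
  intro V _ Γ _ hconn hdeg hbetti
  -- bound on the number of vertices
  have hne : Nonempty V := hconn.nonempty
  have hcard1 : 1 ≤ Fintype.card V := Fintype.card_pos
  have hsum : ∑ v : V, Γ.degree v = 2 * Γ.edgeFinset.card :=
    SimpleGraph.sum_degrees_eq_twice_card_edges Γ
  have h3 : 3 * Fintype.card V ≤ ∑ v : V, Γ.degree v := by
    calc 3 * Fintype.card V = ∑ _v : V, 3 := by
          simp [Finset.sum_const, mul_comm]
      _ ≤ ∑ v : V, Γ.degree v := Finset.sum_le_sum fun v _ => hdeg v
  have hVle : Fintype.card V ≤ N := by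
    rw [hsum] at h3
    omega
  -- transport Γ to a graph on `Fin (card V)`
  let f : V ≃ Fin (Fintype.card V) := Fintype.equivFin V
  let G0 : SimpleGraph (Fin (Fintype.card V)) := SimpleGraph.comap f.symm Γ
  have hiso : Γ ≃g G0 := ⟨f, by simp [G0, SimpleGraph.comap]⟩
  have hlt : Fintype.card V < N + 1 := Nat.lt_succ_of_le hVle
  refine ⟨e.symm ⟨⟨Fintype.card V, hlt⟩, G0⟩, ?_⟩
  have hei : e (e.symm ⟨⟨Fintype.card V, hlt⟩, G0⟩) = ⟨⟨Fintype.card V, hlt⟩, G0⟩ :=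
    e.apply_symm_apply _
  show Nonempty (Γ ≃g (e (e.symm ⟨⟨Fintype.card V, hlt⟩, G0⟩)).2)
  rw [hei]
  exact ⟨hiso⟩
end

section
/- Let G be a group with a finite generating set S such that the word metric d_S on G is δ-hyperbolic, and let K ≥ 1, C ≥ 0. Then there exists D ≥ 0, depending only on δ, K, C, with the following property. Let H₁ ≤ H₂ ≤ G be subgroups, let (T₁,d₁) and (T₂,d₂) be ℝ-trees with basepoints t₁ ∈ T₁, t₂ ∈ T₂, equipped with free actions of H₁ and H₂ respectively by isometries, and let f₁ : T₁ → (G,d_S) and f₂ : T₂ → (G,d_S) be, respectively, an H₁-equivariant and an H₂-equivariant (K,C)-quasi-isometric embedding with f₁(t₁) = 1 and f₂(t₂) = 1. Assume that every point of T₁ lies on a geodesic segment between two points of the orbit H₁·t₁. Then for every x ∈ T₁ there is y ∈ T₂ with d_S(f₁(x), f₂(y)) ≤ D. -/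
/-- Word length of `g` with respect to a generating set `S`: the least `n` such that `g`
is a product of `n` elements of `S ∪ S⁻¹`. -/
noncomputable def wordLength {G : Type*} [Group G] (S : Set G) (g : G) : ℕ :=
  sInf {n | ∃ l : List G, l.length = n ∧ (∀ x ∈ l, x ∈ S ∪ S⁻¹) ∧ l.prod = g}

/-- Word metric on `G` with respect to `S`. -/
noncomputable def wordDist {G : Type*} [Group G] (S : Set G) (g h : G) : ℝ :=
  (wordLength S (g⁻¹ * h) : ℝ)

/-- `f` is a `(K, C)`-quasi-isometric embedding with respect to given distance functions. -/
def IsQIE {X Y : Type*} (dX : X → X → ℝ) (dY : Y → Y → ℝ) (f : X → Y) (K C : ℝ) : Prop :=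
  ∀ x x' : X, (1 / K) * dX x x' - C ≤ dY (f x) (f x') ∧ dY (f x) (f x') ≤ K * dX x x' + C

/-- `H` is a quasiconvex free subgroup of rank `r` of `G` with respect to `S`: there is an
isomorphism from the free group of rank `r` onto `H` which is a quasi-isometric embedding
from the word metric of a free basis to the word metric of `S`. -/
def IsQCFreeOfRank {G : Type*} [Group G] (S : Set G) (r : ℕ) (H : Subgroup G) : Prop :=
  ∃ K C : ℝ, 1 ≤ K ∧ 0 ≤ C ∧ ∃ φ : FreeGroup (Fin r) ≃* H,
    IsQIE (wordDist (Set.range (FreeGroup.of : Fin r → FreeGroup (Fin r))))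
      (wordDist S) (fun w => ((φ w : H) : G)) K C

/-- An ℝ-tree: a geodesic metric space which is 0-hyperbolic. -/
def IsRTree (T : Type*) [MetricSpace T] : Prop :=
  IsGeodesicSpace T ∧ IsHyperbolic (fun x y : T => dist x y) 0

/-- `γ` is a geodesic segment from `x` to `y`, parametrized on `[0, dist x y]`. -/
def IsGeodesicSegment {T : Type*} [MetricSpace T] (γ : ℝ → T) (x y : T) : Prop :=
  γ 0 = x ∧ γ (dist x y) = y ∧
    ∀ s t : ℝ, s ∈ Set.Icc (0 : ℝ) (dist x y) → t ∈ Set.Icc (0 : ℝ) (dist x y) →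
      dist (γ s) (γ t) = |s - t|

/-- The point `x` lies on some geodesic segment between two points of the orbit of `t₀`
under the action `a` of `H`. -/
def LiesOnOrbitGeodesic {T : Type*} [MetricSpace T] {H : Type*} [Group H]
    (a : H →* (T ≃ᵢ T)) (t₀ x : T) : Prop :=
  ∃ (g g' : H) (γ : ℝ → T), IsGeodesicSegment γ (a g t₀) (a g' t₀) ∧
    ∃ s ∈ Set.Icc (0 : ℝ) (dist (a g t₀) (a g' t₀)), γ s = x

namespace TreeNbhd

variable {G : Type*} [Group G] {S : Set G}

lemma wl_set_nonempty (hS : Subgroup.closure S = ⊤) (g : G) :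
    {n | ∃ l : List G, l.length = n ∧ (∀ x ∈ l, x ∈ S ∪ S⁻¹) ∧ l.prod = g}.Nonempty := by
  have hg : g ∈ Submonoid.closure (S ∪ S⁻¹) := by
    have : g ∈ (Subgroup.closure S).toSubmonoid := by
      rw [hS]; trivial
    rwa [Subgroup.closure_toSubmonoid] at this
  obtain ⟨l, hl, hp⟩ := Submonoid.exists_list_of_mem_closure hg
  exact ⟨l.length, l, rfl, hl, hp⟩

lemma wordLength_spec (hS : Subgroup.closure S = ⊤) (g : G) :
    ∃ l : List G, l.length = wordLength S g ∧ (∀ x ∈ l, x ∈ S ∪ S⁻¹) ∧ l.prod = g :=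
  Nat.sInf_mem (wl_set_nonempty hS g)

lemma wordLength_le {g : G} (l : List G) (hl : ∀ x ∈ l, x ∈ S ∪ S⁻¹) (hp : l.prod = g) :
    wordLength S g ≤ l.length :=
  Nat.sInf_le ⟨l, rfl, hl, hp⟩

lemma wordLength_one : wordLength S (1 : G) = 0 :=
  Nat.le_zero.mp (wordLength_le ([] : List G) (by simp) (by simp))

lemma mem_symm_inv {x : G} (hx : x ∈ S ∪ S⁻¹) : x⁻¹ ∈ S ∪ S⁻¹ := by
  rcases hx with h | h
  · exact Or.inr (by simpa using h)
  · exact Or.inl (by simpa using h)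

lemma wordLength_inv_le (hS : Subgroup.closure S = ⊤) (g : G) :
    wordLength S g⁻¹ ≤ wordLength S g := by
  obtain ⟨l, hlen, hmem, hp⟩ := wordLength_spec hS g
  have hp' : ((l.map fun x => x⁻¹).reverse).prod = g⁻¹ := by
    rw [← List.prod_inv_reverse, hp]
  have hmem' : ∀ x ∈ (l.map fun x => x⁻¹).reverse, x ∈ S ∪ S⁻¹ := by
    intro x hx
    rw [List.mem_reverse, List.mem_map] at hx
    obtain ⟨y, hy, rfl⟩ := hx
    exact mem_symm_inv (hmem y hy)
  calc wordLength S g⁻¹ ≤ ((l.map fun x => x⁻¹).reverse).length :=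
        wordLength_le _ hmem' hp'
    _ = l.length := by simp
    _ = wordLength S g := hlen

lemma wordLength_inv (hS : Subgroup.closure S = ⊤) (g : G) :
    wordLength S g⁻¹ = wordLength S g :=
  le_antisymm (wordLength_inv_le hS g) (by
    simpa using wordLength_inv_le hS g⁻¹)

lemma wordLength_mul_le (hS : Subgroup.closure S = ⊤) (g h : G) :
    wordLength S (g * h) ≤ wordLength S g + wordLength S h := by
  obtain ⟨l₁, hlen₁, hmem₁, hp₁⟩ := wordLength_spec hS g
  obtain ⟨l₂, hlen₂, hmem₂, hp₂⟩ := wordLength_spec hS h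
  calc wordLength S (g * h) ≤ (l₁ ++ l₂).length := by
        refine wordLength_le _ ?_ (by rw [List.prod_append, hp₁, hp₂])
        intro x hx
        rcases List.mem_append.mp hx with h' | h'
        · exact hmem₁ x h'
        · exact hmem₂ x h'
    _ = wordLength S g + wordLength S h := by simp [hlen₁, hlen₂]

lemma wd_self (g : G) : wordDist S g g = 0 := by
  simp [wordDist, wordLength_one]

lemma wd_nonneg (g h : G) : 0 ≤ wordDist S g h := Nat.cast_nonneg _

lemma wd_symm (hS : Subgroup.closure S = ⊤) (g h : G) : wordDist S g h = wordDist S h g := by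
  unfold wordDist
  rw [show h⁻¹ * g = (g⁻¹ * h)⁻¹ by group, wordLength_inv hS]

lemma wd_triangle (hS : Subgroup.closure S = ⊤) (x y z : G) :
    wordDist S x z ≤ wordDist S x y + wordDist S y z := by
  unfold wordDist
  rw [← Nat.cast_add]
  exact_mod_cast (show x⁻¹ * z = (x⁻¹ * y) * (y⁻¹ * z) by group) ▸
    wordLength_mul_le hS (x⁻¹ * y) (y⁻¹ * z)

/-- Existence of discrete geodesic chains for the word metric. -/
lemma wd_chain (hS : Subgroup.closure S = ⊤) (x y : G) :
    ∃ (n : ℕ) (c : ℕ → G), (n : ℝ) = wordDist S x y ∧ c 0 = x ∧ c n = y ∧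
      ∀ i j, i ≤ n → j ≤ n → wordDist S (c i) (c j) = |(i : ℝ) - (j : ℝ)| := by
  obtain ⟨l, hlen, hmem, hp⟩ := wordLength_spec hS (x⁻¹ * y)
  set n := wordLength S (x⁻¹ * y) with hn
  refine ⟨n, fun i => x * (l.take i).prod, by simp [wordDist, hn], by simp, ?_, ?_⟩
  · show x * (List.take n l).prod = y
    rw [← hlen, List.take_length, hp]
    group
  · -- first: upper bound for i ≤ j, at the wordLength level
    have key : ∀ i j, i ≤ j → j ≤ n →
        wordLength S ((x * (l.take i).prod)⁻¹ * (x * (l.take j).prod)) ≤ j - i := by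
      intro i j hij hj
      have hsplit : l.take j = l.take i ++ (l.drop i).take (j - i) := by
        rw [← List.take_add]
        congr 1
        omega
      have hprod : (x * (l.take i).prod)⁻¹ * (x * (l.take j).prod)
          = ((l.drop i).take (j - i)).prod := by
        rw [hsplit, List.prod_append]
        group
      have hmem' : ∀ z ∈ (l.drop i).take (j - i), z ∈ S ∪ S⁻¹ := fun z hz =>
        hmem z (List.mem_of_mem_drop (List.mem_of_mem_take hz))
      have hlen' : ((l.drop i).take (j - i)).length = j - i := by
        rw [List.length_take, List.length_drop, hlen]
        omega
      calc wordLength S ((x * (l.take i).prod)⁻¹ * (x * (l.take j).prod))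
          ≤ ((l.drop i).take (j - i)).length := wordLength_le _ hmem' (hprod.symm)
        _ = j - i := hlen'
    have keyeq : ∀ i j, i ≤ j → j ≤ n →
        wordLength S ((x * (l.take i).prod)⁻¹ * (x * (l.take j).prod)) = j - i := by
      intro i j hij hj
      refine le_antisymm (key i j hij hj) ?_
      -- lower bound from subadditivity
      have h1 := key 0 i (by omega) (by omega)
      have h2 := key j n (by omega) (by omega)
      have h3 : n ≤ wordLength S ((x * (l.take 0).prod)⁻¹ * (x * (l.take i).prod))
          + wordLength S ((x * (l.take i).prod)⁻¹ * (x * (l.take j).prod))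
          + wordLength S ((x * (l.take j).prod)⁻¹ * (x * (l.take n).prod)) := by
        have e : x⁻¹ * y = ((x * (l.take 0).prod)⁻¹ * (x * (l.take i).prod))
            * (((x * (l.take i).prod)⁻¹ * (x * (l.take j).prod))
              * ((x * (l.take j).prod)⁻¹ * (x * (l.take n).prod))) := by
          have : x * (l.take n).prod = y := by
            rw [← hlen, List.take_length, hp]; group
          simp only [List.take_zero, List.prod_nil]
          rw [this]; group
        calc n = wordLength S (x⁻¹ * y) := hn
          _ ≤ _ := by
            rw [e]
            refine le_trans (wordLength_mul_le hS _ _) ?_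
            have := wordLength_mul_le hS ((x * (l.take i).prod)⁻¹ * (x * (l.take j).prod))
              ((x * (l.take j).prod)⁻¹ * (x * (l.take n).prod))
            omega
      omega
    intro i j hi hj
    rcases le_total i j with hij | hij
    · have := keyeq i j hij hj
      unfold wordDist
      rw [this, abs_of_nonpos (by
        have : (i:ℝ) ≤ j := Nat.cast_le.mpr hij
        linarith)]
      push_cast [Nat.cast_sub hij]
      ring
    · have := keyeq j i hij hi
      unfold wordDist
      rw [show (x * (l.take i).prod)⁻¹ * (x * (l.take j).prod)
          = ((x * (l.take j).prod)⁻¹ * (x * (l.take i).prod))⁻¹ by group,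
        wordLength_inv hS, this, abs_of_nonneg (by
        have : (j:ℝ) ≤ i := Nat.cast_le.mpr hij
        linarith)]
      push_cast [Nat.cast_sub hij]
      ring

structure MetricLike {G : Type*} (d : G → G → ℝ) : Prop where
  symm : ∀ x y, d x y = d y x
  self : ∀ x, d x x = 0
  nonneg : ∀ x y, 0 ≤ d x y
  tri : ∀ x y z, d x z ≤ d x y + d y z
  chain : ∀ x y, ∃ (n : ℕ) (c : ℕ → G), (n : ℝ) = d x y ∧ c 0 = x ∧ c n = y ∧
    ∀ i j, i ≤ n → j ≤ n → d (c i) (c j) = |(i : ℝ) - (j : ℝ)|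

def Geo {G : Type*} (d : G → G → ℝ) (c : ℕ → G) (n : ℕ) : Prop :=
  ∀ i j, i ≤ n → j ≤ n → d (c i) (c j) = |(i : ℝ) - (j : ℝ)|

def PathLe {G : Type*} (d : G → G → ℝ) (P : ℕ → G) (M : ℕ) (lam : ℝ) : Prop :=
  ∀ k, k < M → d (P k) (P (k + 1)) ≤ lam

variable {G : Type*} {d : G → G → ℝ} {δ : ℝ}

lemma abs_cast_sub_of_le {i j : ℕ} (h : i ≤ j) : |(i : ℝ) - (j : ℝ)| = (j : ℝ) - i := by
  have : (i : ℝ) ≤ j := Nat.cast_le.mpr h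
  rw [abs_of_nonpos (by linarith)]; ring

/-- If `p` is `2δ`-close to being on a geodesic side `[x, z]` in the Gromov-product sense,
then `p` is `4δ+1`-close to a point of the chain from `x` to `z`. -/
lemma near_geo (hd : MetricLike d) (hyp : IsHyperbolic d δ) (hδ : 0 ≤ δ)
    (p x z : G) (c : ℕ → G) (m : ℕ) (hc0 : c 0 = x) (hcm : c m = z) (hgeo : Geo d c m)
    (hpx : d p x + d p z ≤ d x z + 2 * δ) :
    ∃ j ≤ m, d p (c j) ≤ 4 * δ + 1 := by
  set t := d p x with ht
  have ht0 : 0 ≤ t := hd.nonneg _ _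
  have hxz : d x z = (m : ℝ) := by
    have := hgeo 0 m (by omega) le_rfl
    rw [hc0, hcm] at this
    rw [this, abs_cast_sub_of_le (by omega)]; simp
  by_cases hcase : ⌈t⌉₊ ≤ m
  · refine ⟨⌈t⌉₊, hcase, ?_⟩
    set j := ⌈t⌉₊ with hj
    have hjx : d (c j) x = (j : ℝ) := by
      have := hgeo j 0 hcase (by omega)
      rw [hc0] at this
      rw [this, abs_of_nonneg (by simp)]; simp
    have hjz : d (c j) z = (m : ℝ) - j := by
      have := hgeo j m hcase le_rfl
      rw [hcm] at this
      rw [this, abs_cast_sub_of_le hcase]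
    have h4 := hyp p (c j) x z
    have htj : t ≤ (j : ℝ) := Nat.le_ceil t
    have hjt : (j : ℝ) ≤ t + 1 := le_of_lt (Nat.ceil_lt_add_one ht0)
    have hpz : d p z ≤ (m : ℝ) + 2 * δ - t := by rw [hxz] at hpx; linarith
    have h5 : d p x + d (c j) z ≤ (m : ℝ) := by rw [hjz, ← ht]; linarith
    have h6 : d p z + d (c j) x ≤ (m : ℝ) + 2 * δ + 1 := by rw [hjx]; linarith
    have h7 : max (d p x + d (c j) z) (d p z + d (c j) x) ≤ (m : ℝ) + 2 * δ + 1 :=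
      max_le (by linarith) h6
    rw [hxz] at h4
    linarith [le_trans h4 (by linarith : max (d p x + d (c j) z) (d p z + d (c j) x) + 2 * δ ≤ (m:ℝ) + 4 * δ + 1)]
  · refine ⟨m, le_rfl, ?_⟩
    rw [hcm]
    have : (m : ℝ) < t := by
      by_contra h
      push_neg at h
      exact hcase (Nat.ceil_le.mpr h)
    rw [hxz] at hpx
    linarith

/-- Concatenation of paths. -/
lemma path_concat (hd : MetricLike d) {P₁ P₂ : ℕ → G} {M₁ M₂ : ℕ} {lam : ℝ}
    (h₁ : PathLe d P₁ M₁ lam) (h₂ : PathLe d P₂ M₂ lam) (hjoin : P₁ M₁ = P₂ 0) :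
    ∃ P : ℕ → G, PathLe d P (M₁ + M₂) lam ∧ P 0 = P₁ 0 ∧ P (M₁ + M₂) = P₂ M₂ ∧
      ∀ k ≤ M₁ + M₂, (∃ j ≤ M₁, P k = P₁ j) ∨ (∃ j ≤ M₂, P k = P₂ j) := by
  refine ⟨fun k => if k < M₁ then P₁ k else P₂ (k - M₁), ?_, ?_, ?_, ?_⟩
  · intro k hk
    by_cases h : k + 1 < M₁
    · simp only [if_pos (by omega : k < M₁), if_pos h]
      exact h₁ k (by omega)
    · by_cases h' : k < M₁
      · have : k + 1 = M₁ := by omega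
        simp only [if_pos h', if_neg h]
        rw [show k + 1 - M₁ = 0 by omega, ← hjoin, ← this]
        exact h₁ k (by omega)
      · simp only [if_neg h', if_neg h]
        rw [show k + 1 - M₁ = (k - M₁) + 1 by omega]
        exact h₂ (k - M₁) (by omega)
  · by_cases h : 0 < M₁
    · simp [h]
    · simp only [if_neg h]
      rw [show (0:ℕ) - M₁ = 0 by omega, ← hjoin]
      congr 1; omega
  · simp only [if_neg (by omega : ¬ M₁ + M₂ < M₁)]
    congr 1; omega
  · intro k hk
    by_cases h : k < M₁
    · exact Or.inl ⟨k, by omega, by simp [h]⟩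
    · exact Or.inr ⟨k - M₁, by omega, by simp [h]⟩

/-- A geodesic chain is a path with unit steps. -/
lemma geo_pathLe (hgeo : Geo d c n) {lam : ℝ} (hlam : 1 ≤ lam) : PathLe d c n lam := by
  intro k hk
  rw [hgeo k (k+1) (by omega) (by omega)]
  rw [abs_cast_sub_of_le (by omega)]
  push_cast; linarith

/-- Main halving lemma: a point on a geodesic chain is within `(4δ+1)m + lam` of a path of
length at most `2^m` with steps at most `lam`, sharing the same endpoints. -/
lemma log_lemma (hd : MetricLike d) (hyp : IsHyperbolic d δ) (hδ : 0 ≤ δ)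
    {lam : ℝ} (hlam : 1 ≤ lam) :
    ∀ m : ℕ, ∀ N : ℕ, N ≤ 2 ^ m → ∀ a : ℕ → G, PathLe d a N lam →
    ∀ (c : ℕ → G) (n : ℕ), Geo d c n → c 0 = a 0 → c n = a N →
    ∀ i ≤ n, ∃ k ≤ N, d (c i) (a k) ≤ (4 * δ + 1) * m + lam := by
  intro m
  induction m with
  | zero =>
    intro N hN a ha c n hgeo hc0 hcn i hi
    refine ⟨0, by omega, ?_⟩
    have h1 : d (c i) (c 0) = (i : ℝ) := by
      rw [hgeo i 0 hi (by omega), abs_of_nonneg (by simp)]; simp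
    have h2 : (n : ℝ) = d (a 0) (a N) := by
      rw [← hc0, ← hcn, hgeo 0 n (by omega) le_rfl, abs_cast_sub_of_le (by omega)]; simp
    have h3 : d (a 0) (a N) ≤ lam := by
      interval_cases N
      · rw [hd.self]; linarith
      · exact ha 0 (by omega)
    have h4 : (i : ℝ) ≤ n := Nat.cast_le.mpr hi
    rw [hc0] at h1
    simp only [Nat.cast_zero, mul_zero, zero_add]
    linarith
  | succ m ih =>
    intro N hN a ha c n hgeo hc0 hcn i hi
    have h2 : (2:ℕ) ^ (m + 1) = 2 ^ m + 2 ^ m := by ring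
    rw [h2] at hN
    set N₁ := N / 2 with hN₁
    have hN₁le : N₁ ≤ 2 ^ m := by omega
    have hN₂le : N - N₁ ≤ 2 ^ m := by omega
    set p := c i with hp
    have hpx : d p (c 0) = (i : ℝ) := by
      rw [hgeo i 0 hi (by omega), abs_of_nonneg (by simp)]; simp
    have hpy : d p (c n) = (n : ℝ) - i := by
      rw [hgeo i n hi le_rfl, abs_cast_sub_of_le hi]
    have hxy : d (c 0) (c n) = (n : ℝ) := by
      rw [hgeo 0 n (by omega) le_rfl, abs_cast_sub_of_le (by omega)]; simp
    have hsplit := hyp (c 0) (c n) (a N₁) p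
    -- two cases according to the max
    have hkey : d p (c 0) + d p (a N₁) ≤ d (c 0) (a N₁) + 2 * δ ∨
        d p (c n) + d p (a N₁) ≤ d (c n) (a N₁) + 2 * δ := by
      rcases max_cases (d (c 0) (a N₁) + d (c n) p) (d (c 0) p + d (c n) (a N₁)) with
        ⟨hmax, _⟩ | ⟨hmax, _⟩
      · left
        rw [hmax] at hsplit
        linarith [hd.symm (a N₁) p, hd.symm (c n) p, hpx, hpy, hxy, hsplit]
      · right
        rw [hmax] at hsplit
        linarith [hd.symm (a N₁) p, hd.symm (c 0) p, hpx, hpy, hxy, hsplit]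
    rcases hkey with hcase | hcase
    · -- near the side [c 0, a N₁]
      obtain ⟨m₂, c₂, hm₂, hc₂0, hc₂m, hgeo₂⟩ := hd.chain (c 0) (a N₁)
      obtain ⟨j, hj, hdj⟩ := near_geo hd hyp hδ p (c 0) (a N₁) c₂ m₂ hc₂0 hc₂m hgeo₂ hcase
      have ha' : PathLe d a N₁ lam := fun k hk => ha k (by omega)
      obtain ⟨k, hk, hdk⟩ := ih N₁ hN₁le a ha' c₂ m₂ hgeo₂ (by rw [hc₂0, hc0])
        hc₂m j hj
      refine ⟨k, by omega, ?_⟩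
      calc d (c i) (a k) ≤ d p (c₂ j) + d (c₂ j) (a k) := hd.tri _ _ _
        _ ≤ (4 * δ + 1) + ((4 * δ + 1) * m + lam) := add_le_add hdj hdk
        _ = (4 * δ + 1) * (↑(m + 1)) + lam := by push_cast; ring
    · -- near the side [c n, a N₁]; use the reversed path
      obtain ⟨m₃, c₃, hm₃, hc₃0, hc₃m, hgeo₃⟩ := hd.chain (c n) (a N₁)
      obtain ⟨j, hj, hdj⟩ := near_geo hd hyp hδ p (c n) (a N₁) c₃ m₃ hc₃0 hc₃m hgeo₃ hcase
      set N₂ := N - N₁ with hN₂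
      have ha'' : PathLe d (fun k => a (N - k)) N₂ lam := by
        intro k hk
        have e : N - (k + 1) + 1 = N - k := by omega
        rw [hd.symm]
        have := ha (N - (k+1)) (by omega)
        rwa [e] at this
      obtain ⟨k, hk, hdk⟩ := ih N₂ hN₂le (fun k => a (N - k)) ha'' c₃ m₃ hgeo₃
        (by show c₃ 0 = a (N - 0); rw [hc₃0, hcn, Nat.sub_zero])
        (by show c₃ m₃ = a (N - N₂); rw [hc₃m]; congr 1; omega) j hj
      refine ⟨N - k, by omega, ?_⟩
      calc d (c i) (a (N - k)) ≤ d p (c₃ j) + d (c₃ j) (a (N - k)) := hd.tri _ _ _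
        _ ≤ (4 * δ + 1) + ((4 * δ + 1) * m + lam) := add_le_add hdj hdk
        _ = (4 * δ + 1) * (↑(m + 1)) + lam := by push_cast; ring


set_option maxHeartbeats 1600000

lemma one_le_KC {K C : ℝ} (hK : 1 ≤ K) (hC : 0 ≤ C) : 1 ≤ K + C := by linarith

/-- Part 1 of the Morse lemma: every point of a geodesic chain between the endpoints of a
quasigeodesic is within `M` of a sample point of the quasigeodesic. -/
lemma part1 (hd : MetricLike d) (hyp : IsHyperbolic d δ) (hδ : 0 ≤ δ)
    (K C M : ℝ) (hK : 1 ≤ K) (hC : 0 ≤ C)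
    (hM : ∀ D : ℝ, 0 ≤ D →
      D ≤ (4*δ+1) * (4 * Real.sqrt ((6*K+2)*D + (2*K+K*C+3))) + (K+C) → D ≤ M)
    (α : ℝ → G) (L : ℝ) (hL : 0 ≤ L)
    (hup : ∀ t t', t ∈ Set.Icc 0 L → t' ∈ Set.Icc 0 L → d (α t) (α t') ≤ K * |t - t'| + C)
    (hlow : ∀ t t', t ∈ Set.Icc 0 L → t' ∈ Set.Icc 0 L → (1/K) * |t - t'| - C ≤ d (α t) (α t'))
    (c : ℕ → G) (n : ℕ) (hc0 : c 0 = α 0) (hcn : c n = α L) (hgeo : Geo d c n) :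
    ∀ i ≤ n, ∃ k ≤ ⌈L⌉₊, d (c i) (α (min (k : ℝ) L)) ≤ M := by
  have hK0 : (0:ℝ) < K := by linarith
  set N := ⌈L⌉₊ with hN
  set a : ℕ → G := fun k => α (min (k : ℝ) L) with ha_def
  have hmem : ∀ k : ℕ, (min (k : ℝ) L) ∈ Set.Icc (0:ℝ) L :=
    fun k => ⟨le_min (Nat.cast_nonneg k) hL, min_le_right _ _⟩
  have ha0 : a 0 = α 0 := by
    have : min ((0:ℕ) : ℝ) L = 0 := by
      rw [Nat.cast_zero]; exact min_eq_left hL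
    show α (min ((0:ℕ):ℝ) L) = α 0
    rw [this]
  have haN : a N = α L := by
    have : min ((N:ℕ) : ℝ) L = L := min_eq_right (Nat.le_ceil L)
    show α (min ((N:ℕ):ℝ) L) = α L
    rw [this]
  have htk_up : ∀ k : ℕ, min (k:ℝ) L ≤ k := fun k => min_le_left _ _
  have htk_lo : ∀ k : ℕ, k ≤ N → (k:ℝ) - 1 ≤ min (k:ℝ) L := by
    intro k hk
    by_cases h : (k:ℝ) ≤ L
    · rw [min_eq_left h]; linarith
    · push_neg at h
      rw [min_eq_right h.le]
      have h1 : (k:ℝ) ≤ N := Nat.cast_le.2 hk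
      have h2 : (N:ℝ) < L + 1 := Nat.ceil_lt_add_one hL
      linarith
  have hstep : PathLe d a N (K + C) := by
    intro k hk
    have h1 : min (k:ℝ) L ≤ min ((k:ℝ) + 1) L := min_le_min (by linarith) le_rfl
    have h2 : min ((k:ℝ) + 1) L ≤ min (k:ℝ) L + 1 := by
      rcases le_total (k:ℝ) L with h | h
      · rw [min_eq_left h]
        exact le_trans (min_le_left _ _) (by linarith)
      · rw [min_eq_right h]
        exact le_trans (min_le_right _ _) (by linarith)
    have habs : |min (k:ℝ) L - min ((k:ℝ)+1) L| ≤ 1 := abs_le.2 ⟨by linarith, by linarith⟩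
    have := hup (min (k:ℝ) L) (min ((k+1:ℕ):ℝ) L) (hmem k) (hmem (k+1))
    push_cast at this
    calc d (a k) (a (k+1)) ≤ K * |min (k:ℝ) L - min ((k:ℝ)+1) L| + C := by
          rw [ha_def]; push_cast; exact this
      _ ≤ K * 1 + C := by
          have := mul_le_mul_of_nonneg_left habs (le_of_lt hK0)
          linarith
      _ = K + C := by ring
  have hne1 : (Finset.range (N+1)).Nonempty := ⟨0, by simp⟩
  have hne2 : (Finset.range (n+1)).Nonempty := ⟨0, by simp⟩
  set F : ℕ → ℝ := fun i => (Finset.range (N+1)).inf' hne1 (fun k => d (c i) (a k)) with hF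
  set D := (Finset.range (n+1)).sup' hne2 F with hDdef
  have hFle : ∀ i, i ≤ n → F i ≤ D := fun i hi =>
    Finset.le_sup' F (Finset.mem_range.2 (by omega))
  have hFex : ∀ i, ∃ k ≤ N, F i = d (c i) (a k) := by
    intro i
    obtain ⟨k, hk, he⟩ := Finset.exists_mem_eq_inf' hne1 (fun k => d (c i) (a k))
    exact ⟨k, by simpa [Nat.lt_succ_iff] using Finset.mem_range.1 hk, he⟩
  have hFinf : ∀ i k, k ≤ N → F i ≤ d (c i) (a k) := fun i k hk =>
    Finset.inf'_le _ (Finset.mem_range.2 (by omega))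
  have hD0 : 0 ≤ D := by
    obtain ⟨k, hk, he⟩ := hFex 0
    have h1 := hd.nonneg (c 0) (a k)
    have h2 := hFle 0 (by omega)
    linarith [he ▸ h1]
  -- it suffices to bound D
  suffices hDM : D ≤ M by
    intro i hi
    obtain ⟨k, hk, he⟩ := hFex i
    refine ⟨k, hk, ?_⟩
    have : d (c i) (a k) ≤ M := by
      rw [← he]; exact le_trans (hFle i hi) hDM
    exact this
  apply hM D hD0
  obtain ⟨i₀, hi₀mem, hi₀⟩ := Finset.exists_mem_eq_sup' hne2 F
  have hi₀n : i₀ ≤ n := by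
    have := Finset.mem_range.1 hi₀mem; omega
  set p := c i₀ with hp
  have hDlow : ∀ k, k ≤ N → D ≤ d p (a k) := by
    intro k hk
    rw [hDdef, hi₀]
    exact hFinf i₀ k hk
  set R := ⌈2*D⌉₊ with hR
  have hR1 : 2*D ≤ (R:ℝ) := Nat.le_ceil _
  have hR2 : (R:ℝ) ≤ 2*D + 1 := le_of_lt (Nat.ceil_lt_add_one (by linarith))
  set i₁ := i₀ - R with hi₁def
  set i₂ := min (i₀ + R) n with hi₂def
  have hi₁n : i₁ ≤ n := by omega
  have hi₂n : i₂ ≤ n := by omega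
  have hi₁₀ : i₁ ≤ i₀ := by omega
  have hi₀₂ : i₀ ≤ i₂ := by omega
  have hd1 : d (c i₁) p = ((i₀ - i₁ : ℕ) : ℝ) := by
    rw [hgeo i₁ i₀ hi₁n hi₀n, abs_cast_sub_of_le hi₁₀, Nat.cast_sub hi₁₀]
  have hd2 : d p (c i₂) = ((i₂ - i₀ : ℕ) : ℝ) := by
    rw [hgeo i₀ i₂ hi₀n hi₂n, abs_cast_sub_of_le hi₀₂, Nat.cast_sub hi₀₂]
  have hd1R : d (c i₁) p ≤ 2*D + 1 := by
    rw [hd1]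
    have : i₀ - i₁ ≤ R := by omega
    calc ((i₀ - i₁ : ℕ):ℝ) ≤ (R:ℝ) := Nat.cast_le.2 this
      _ ≤ 2*D + 1 := hR2
  have hd2R : d p (c i₂) ≤ 2*D + 1 := by
    rw [hd2]
    have : i₂ - i₀ ≤ R := by omega
    calc ((i₂ - i₀ : ℕ):ℝ) ≤ (R:ℝ) := Nat.cast_le.2 this
      _ ≤ 2*D + 1 := hR2
  -- first connecting segment
  have hseg₁ : ∃ (k₁ n₁ : ℕ) (P₁ : ℕ → G), k₁ ≤ N ∧ (n₁:ℝ) ≤ D ∧ PathLe d P₁ n₁ (K+C) ∧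
      P₁ 0 = c i₁ ∧ P₁ n₁ = a k₁ ∧ (∀ j ≤ n₁, D ≤ d p (P₁ j)) ∧ d (c i₁) (a k₁) ≤ D := by
    by_cases h : i₁ = 0
    · refine ⟨0, 0, fun _ => c i₁, by omega, by simpa using hD0, by intro k hk; omega,
        rfl, by rw [h, hc0, ha0], ?_, ?_⟩
      · intro j hj
        have hj0 : j = 0 := by omega
        subst hj0
        have := hDlow 0 (by omega)
        rwa [h, hc0, ← ha0]
      · rw [h, hc0, ← ha0, ha0, ← hc0, ← h]
        rw [show c i₁ = a 0 by rw [h, hc0, ha0]]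
        rw [hd.self]; exact hD0
    · obtain ⟨k₁, hk₁, hFi₁⟩ := hFex i₁
      obtain ⟨n₁, P₁, hn₁, hP₁0, hP₁n, hgeoP₁⟩ := hd.chain (c i₁) (a k₁)
      have hcd : d (c i₁) (a k₁) ≤ D := by
        rw [← hFi₁]; exact hFle i₁ hi₁n
      have hn₁D : (n₁:ℝ) ≤ D := by rw [hn₁]; exact hcd
      refine ⟨k₁, n₁, P₁, hk₁, hn₁D, geo_pathLe hgeoP₁ (one_le_KC hK hC), hP₁0, hP₁n, ?_, hcd⟩
      intro j hj
      have h1 : d (P₁ 0) (P₁ j) = (j:ℝ) := by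
        rw [hgeoP₁ 0 j (by omega) hj, abs_cast_sub_of_le (by omega)]; simp
      have hRe : i₀ - i₁ = R := by omega
      have h2 : d (c i₁) p = (R:ℝ) := by rw [hd1, hRe]
      have h3 := hd.tri p (P₁ j) (c i₁)
      have h4 : d (P₁ j) (c i₁) = (j:ℝ) := by rw [hd.symm, ← hP₁0]; exact h1
      have h5 : d p (c i₁) = (R:ℝ) := by rw [hd.symm]; exact h2
      have h6 : (j:ℝ) ≤ n₁ := Nat.cast_le.2 hj
      linarith
  -- second connecting segment
  have hseg₂ : ∃ (k₂ n₂ : ℕ) (P₂ : ℕ → G), k₂ ≤ N ∧ (n₂:ℝ) ≤ D ∧ PathLe d P₂ n₂ (K+C) ∧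
      P₂ 0 = a k₂ ∧ P₂ n₂ = c i₂ ∧ (∀ j ≤ n₂, D ≤ d p (P₂ j)) ∧ d (a k₂) (c i₂) ≤ D := by
    by_cases h : n ≤ i₀ + R
    · have hi₂n' : i₂ = n := by omega
      refine ⟨N, 0, fun _ => c i₂, le_rfl, by simpa using hD0, by intro k hk; omega,
        by rw [hi₂n', hcn, haN], rfl, ?_, ?_⟩
      · intro j hj
        have hj0 : j = 0 := by omega
        subst hj0
        have := hDlow N le_rfl
        rwa [hi₂n', hcn, ← haN]
      · rw [show c i₂ = a N by rw [hi₂n', hcn, haN], hd.self]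
        exact hD0
    · obtain ⟨k₂, hk₂, hFi₂⟩ := hFex i₂
      obtain ⟨n₂, P₂, hn₂, hP₂0, hP₂n, hgeoP₂⟩ := hd.chain (a k₂) (c i₂)
      have hcd : d (a k₂) (c i₂) ≤ D := by
        rw [hd.symm, ← hFi₂]; exact hFle i₂ hi₂n
      have hn₂D : (n₂:ℝ) ≤ D := by rw [hn₂]; exact hcd
      refine ⟨k₂, n₂, P₂, hk₂, hn₂D, geo_pathLe hgeoP₂ (one_le_KC hK hC), hP₂0, hP₂n, ?_, hcd⟩
      intro j hj
      have h1 : d (P₂ j) (P₂ n₂) = ((n₂ - j : ℕ):ℝ) := by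
        rw [hgeoP₂ j n₂ hj le_rfl, abs_cast_sub_of_le hj, Nat.cast_sub hj]
      have hRe : i₂ - i₀ = R := by omega
      have h2 : d p (c i₂) = (R:ℝ) := by rw [hd2, hRe]
      have h3 := hd.tri p (P₂ j) (c i₂)
      have h4 : d (P₂ j) (c i₂) = ((n₂ - j : ℕ):ℝ) := by rw [← hP₂n]; exact h1
      have h6 : ((n₂ - j : ℕ):ℝ) ≤ (n₂:ℝ) := Nat.cast_le.2 (by omega)
      linarith
  obtain ⟨k₁, n₁, P₁, hk₁N, hn₁D, hP₁path, hP₁0, hP₁n, hP₁low, hP₁d⟩ := hseg₁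
  obtain ⟨k₂, n₂, P₂, hk₂N, hn₂D, hP₂path, hP₂0, hP₂n, hP₂low, hP₂d⟩ := hseg₂
  -- middle segment along the samples
  have hmid : ∃ (m' : ℕ) (Pm : ℕ → G), PathLe d Pm m' (K+C) ∧ Pm 0 = a k₁ ∧ Pm m' = a k₂ ∧
      (∀ j ≤ m', ∃ k ≤ N, Pm j = a k) ∧ (m':ℝ) ≤ |(k₁:ℝ) - (k₂:ℝ)| := by
    rcases le_total k₁ k₂ with h | h
    · refine ⟨k₂ - k₁, fun j => a (k₁ + j), ?_, by simp, by show a (k₁ + (k₂ - k₁)) = a k₂; rw [show k₁ + (k₂ - k₁) = k₂ by omega], ?_, ?_⟩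
      · intro j hj
        have := hstep (k₁ + j) (by omega)
        rwa [show k₁ + j + 1 = k₁ + (j+1) by ring] at this
      · intro j hj
        exact ⟨k₁ + j, by omega, rfl⟩
      · rw [abs_cast_sub_of_le h, ← Nat.cast_sub h]
    · refine ⟨k₁ - k₂, fun j => a (k₁ - j), ?_, by simp, by show a (k₁ - (k₁ - k₂)) = a k₂; rw [show k₁ - (k₁ - k₂) = k₂ by omega], ?_, ?_⟩
      · intro j hj
        rw [hd.symm]
        have := hstep (k₁ - (j+1)) (by omega)
        rwa [show k₁ - (j+1) + 1 = k₁ - j by omega] at this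
      · intro j hj
        exact ⟨k₁ - j, by omega, rfl⟩
      · rw [abs_sub_comm, abs_cast_sub_of_le h, ← Nat.cast_sub h]
  obtain ⟨m', Pm, hPmpath, hPm0, hPmm, hPmmem, hm'⟩ := hmid
  -- bound on m'
  have hak : d (a k₁) (a k₂) ≤ 6*D + 2 := by
    have t1 := hd.tri (a k₁) (c i₁) (a k₂)
    have t2 := hd.tri (c i₁) p (a k₂)
    have t3 := hd.tri p (c i₂) (a k₂)
    have e1 : d (a k₁) (c i₁) = d (c i₁) (a k₁) := hd.symm _ _
    have e2 : d (c i₂) (a k₂) = d (a k₂) (c i₂) := hd.symm _ _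
    have e3 : d (c i₁) p ≤ 2*D+1 := hd1R
    linarith
  have hm'bound : (m':ℝ) ≤ K*(6*D+2+C) + 2 := by
    have hl := hlow (min (k₁:ℝ) L) (min (k₂:ℝ) L) (hmem k₁) (hmem k₂)
    have : (1/K) * |min (k₁:ℝ) L - min (k₂:ℝ) L| - C ≤ 6*D + 2 := le_trans hl hak
    have habs : |min (k₁:ℝ) L - min (k₂:ℝ) L| ≤ K*(6*D+2+C) := by
      have h0 : |min (k₁:ℝ) L - min (k₂:ℝ) L| ≤ K * (6*D+2) + K*C := by
        have := mul_le_mul_of_nonneg_left (show (1/K) * |min (k₁:ℝ) L - min (k₂:ℝ) L| ≤ 6*D+2+C by linarith) (le_of_lt hK0)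
        have hKK : K * ((1/K) * |min (k₁:ℝ) L - min (k₂:ℝ) L|) = |min (k₁:ℝ) L - min (k₂:ℝ) L| := by
          field_simp
        rw [hKK] at this
        linarith [this]
      linarith [h0]
    have hb1 : (k₁:ℝ) - 1 ≤ min (k₁:ℝ) L := htk_lo k₁ hk₁N
    have hb2 : (k₂:ℝ) - 1 ≤ min (k₂:ℝ) L := htk_lo k₂ hk₂N
    have hb3 : min (k₁:ℝ) L ≤ k₁ := htk_up k₁
    have hb4 : min (k₂:ℝ) L ≤ k₂ := htk_up k₂
    have e1 : |(k₁:ℝ) - min (k₁:ℝ) L| ≤ 1 := abs_le.2 ⟨by linarith, by linarith⟩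
    have e2 : |min (k₂:ℝ) L - (k₂:ℝ)| ≤ 1 := abs_le.2 ⟨by linarith, by linarith⟩
    have t1 : |(k₁:ℝ) - (k₂:ℝ)| ≤ |(k₁:ℝ) - min (k₂:ℝ) L| + |min (k₂:ℝ) L - (k₂:ℝ)| :=
      abs_sub_le _ _ _
    have t2 : |(k₁:ℝ) - min (k₂:ℝ) L| ≤ |(k₁:ℝ) - min (k₁:ℝ) L| + |min (k₁:ℝ) L - min (k₂:ℝ) L| :=
      abs_sub_le _ _ _
    calc (m':ℝ) ≤ |(k₁:ℝ) - (k₂:ℝ)| := hm'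
      _ ≤ K*(6*D+2+C) + 2 := by linarith
  -- concatenate
  obtain ⟨Q1, hQ1path, hQ10, hQ1end, hQ1mem⟩ := path_concat hd hP₁path hPmpath (by rw [hP₁n, hPm0])
  obtain ⟨Q, hQpath, hQ0, hQend, hQmem⟩ := path_concat hd hQ1path hP₂path (by rw [hQ1end, hPmm, hP₂0])
  set Mlen := n₁ + m' + n₂ with hMlen
  -- every point of Q is at distance ≥ D from p
  have hQfar : ∀ k ≤ Mlen, D ≤ d p (Q k) := by
    intro k hk
    rcases hQmem k hk with ⟨j, hj, he⟩ | ⟨j, hj, he⟩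
    · rcases hQ1mem j hj with ⟨j', hj', he'⟩ | ⟨j', hj', he'⟩
      · rw [he, he']; exact hP₁low j' hj'
      · rw [he, he']
        obtain ⟨k'', hk'', he''⟩ := hPmmem j' hj'
        rw [he'']
        exact hDlow k'' hk''
    · rw [he]; exact hP₂low j hj
  -- the subchain of c between i₁ and i₂
  set n' := i₂ - i₁ with hn'
  have hgeo' : Geo d (fun j => c (i₁ + j)) n' := by
    intro j j' hj hj'
    have := hgeo (i₁ + j) (i₁ + j') (by omega) (by omega)
    rw [this]
    congr 1
    push_cast; ring
  have hQlen : (Mlen:ℝ) + 1 ≤ (6*K+2)*D + (2*K+K*C+3) := by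
    have : (Mlen:ℝ) = (n₁:ℝ) + m' + n₂ := by rw [hMlen]; push_cast; ring
    rw [this]
    have hKC6 : K*(6*D+2+C) = 6*K*D + 2*K + K*C := by ring
    nlinarith [hm'bound, hn₁D, hn₂D, hD0, hK0]
  set mm := Nat.clog 2 (Mlen + 1) with hmm
  have hpow : Mlen ≤ 2 ^ mm := by
    have h := Nat.le_pow_clog (by omega : 1 < 2) (Mlen + 1)
    rw [← hmm] at h
    omega
  obtain ⟨k, hkM, hkdist⟩ := log_lemma hd hyp hδ (one_le_KC hK hC) mm Mlen hpow Q hQpath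
    (fun j => c (i₁ + j)) n' hgeo'
    (by show c (i₁ + 0) = Q 0; rw [hQ0, hQ10, hP₁0, Nat.add_zero])
    (by show c (i₁ + n') = Q Mlen; rw [hQend, hP₂n]; congr 1; omega)
    (i₀ - i₁) (by omega)
  have hpQ : D ≤ d p (Q k) := hQfar k hkM
  have hpc : d (c (i₁ + (i₀ - i₁))) (Q k) = d p (Q k) := by
    congr 2; omega
  rw [hpc] at hkdist
  -- bound mm by the square root expression
  clear_value D
  set X := (6*K+2)*D + (2*K+K*C+3) with hX
  have hX1 : (1:ℝ) ≤ X := by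
    have : (0:ℝ) ≤ (Mlen:ℝ) := Nat.cast_nonneg _
    linarith
  have hsX : 1 ≤ Real.sqrt X := by
    rw [show (1:ℝ) = Real.sqrt 1 by simp]
    exact Real.sqrt_le_sqrt hX1
  have hmmX : (mm:ℝ) ≤ 4 * Real.sqrt X := by
    by_cases hmm0 : mm = 0
    · rw [hmm0]; push_cast
      positivity
    · have hMlen2 : 2 ≤ Mlen + 1 := by
        by_contra hcon
        push_neg at hcon
        have : Mlen = 0 := by omega
        rw [hmm, this] at hmm0
        simp [Nat.clog_one_right] at hmm0
      have hlt := Nat.pow_pred_clog_lt_self (by omega : 1 < 2) (by omega : 1 < Mlen + 1)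
      have hlt' : ((2:ℝ)) ^ (mm - 1) < X := by
        have h1 : ((2^(mm-1) : ℕ) : ℝ) < ((Mlen + 1 : ℕ) : ℝ) := by
          exact_mod_cast hlt
        have h2 : ((Mlen + 1 : ℕ) : ℝ) ≤ X := by push_cast; linarith [hQlen]
        calc ((2:ℝ))^(mm-1) = ((2^(mm-1) : ℕ) : ℝ) := by push_cast; ring
          _ < X := lt_of_lt_of_le h1 h2
      have hloglt : ((mm - 1 : ℕ):ℝ) * Real.log 2 < Real.log X := by
        rw [← Real.log_pow]
        exact Real.log_lt_log (by positivity) hlt'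
      have hlogX : Real.log X ≤ 2 * Real.sqrt X - 2 := by
        have h1 : Real.log (Real.sqrt X) ≤ Real.sqrt X - 1 :=
          Real.log_le_sub_one_of_pos (by linarith)
        have h2 : Real.log (Real.sqrt X) = Real.log X / 2 := Real.log_sqrt (by linarith)
        linarith
      have hlog2 : (0.6931471803 : ℝ) < Real.log 2 := Real.log_two_gt_d9
      have hcast : ((mm - 1 : ℕ):ℝ) = (mm:ℝ) - 1 := by
        have : 1 ≤ mm := by omega
        push_cast [Nat.cast_sub this]; ring
      rw [hcast] at hloglt
      have hmm1 : (0:ℝ) ≤ (mm:ℝ) - 1 := by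
        have : 1 ≤ mm := by omega
        have h1 : (1:ℝ) ≤ (mm:ℝ) := by exact_mod_cast this
        linarith
      have key : ((mm:ℝ) - 1) * 0.6931471803 ≤ ((mm:ℝ) - 1) * Real.log 2 :=
        mul_le_mul_of_nonneg_left (le_of_lt hlog2) hmm1
      linarith [key, hloglt, hlogX, hsX]
  -- conclude
  have h4δ : (0:ℝ) ≤ 4*δ+1 := by linarith
  calc D ≤ d p (Q k) := hpQ
    _ ≤ (4*δ+1) * mm + (K+C) := hkdist
    _ ≤ (4*δ+1) * (4 * Real.sqrt X) + (K+C) := by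
        have := mul_le_mul_of_nonneg_left hmmX h4δ
        linarith

/-- Morse lemma for a pair of quasigeodesics with common endpoints: every point of the
first is uniformly close to a sample point of the second. -/
lemma morse_pair (hd : MetricLike d) (hyp : IsHyperbolic d δ) (hδ : 0 ≤ δ)
    (K C M : ℝ) (hK : 1 ≤ K) (hC : 0 ≤ C)
    (hM : ∀ D : ℝ, 0 ≤ D →
      D ≤ (4*δ+1) * (4 * Real.sqrt ((6*K+2)*D + (2*K+K*C+3))) + (K+C) → D ≤ M)
    (hM0 : 0 ≤ M)
    (α β : ℝ → G) (L₁ L₂ : ℝ) (hL₁ : 0 ≤ L₁) (hL₂ : 0 ≤ L₂)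
    (hαup : ∀ t t', t ∈ Set.Icc 0 L₁ → t' ∈ Set.Icc 0 L₁ → d (α t) (α t') ≤ K * |t - t'| + C)
    (hαlow : ∀ t t', t ∈ Set.Icc 0 L₁ → t' ∈ Set.Icc 0 L₁ → (1/K) * |t - t'| - C ≤ d (α t) (α t'))
    (hβup : ∀ t t', t ∈ Set.Icc 0 L₂ → t' ∈ Set.Icc 0 L₂ → d (β t) (β t') ≤ K * |t - t'| + C)
    (hβlow : ∀ t t', t ∈ Set.Icc 0 L₂ → t' ∈ Set.Icc 0 L₂ → (1/K) * |t - t'| - C ≤ d (β t) (β t'))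
    (hend0 : α 0 = β 0) (hendL : α L₁ = β L₂) :
    ∀ s ∈ Set.Icc (0:ℝ) L₁, ∃ r ∈ Set.Icc (0:ℝ) L₂,
      d (α s) (β r) ≤ K*(K*(2*M+1+C) + K*(M+C)) + C + 2*M := by
  have hK0 : (0:ℝ) < K := by linarith
  obtain ⟨n, c, hn, hc0, hcn, hgeo⟩ := hd.chain (α 0) (α L₁)
  have P1α := part1 hd hyp hδ K C M hK hC hM α L₁ hL₁ hαup hαlow c n hc0 hcn hgeo
  have P1β := part1 hd hyp hδ K C M hK hC hM β L₂ hL₂ hβup hβlow c n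
    (by rw [hc0, hend0]) (by rw [hcn, hendL]) hgeo
  have hchoice : ∀ i, ∃ k, k ≤ ⌈L₁⌉₊ ∧ (i ≤ n → d (c i) (α (min (k:ℝ) L₁)) ≤ M) := by
    intro i
    by_cases h : i ≤ n
    · obtain ⟨k, hk, hdk⟩ := P1α i h
      exact ⟨k, hk, fun _ => hdk⟩
    · exact ⟨0, by omega, fun h' => absurd h' h⟩
  choose kk hkkN hkkd using hchoice
  set t : ℕ → ℝ := fun i => min (kk i : ℝ) L₁ with ht
  have htmem : ∀ i, t i ∈ Set.Icc (0:ℝ) L₁ :=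
    fun i => ⟨le_min (Nat.cast_nonneg _) hL₁, min_le_right _ _⟩
  intro s hs
  set J := K*(2*M+1+C) + K*(M+C) with hJ
  have hJ1 : 0 ≤ K*(2*M+1+C) := mul_nonneg (le_of_lt hK0) (by linarith)
  have hJ2 : 0 ≤ K*(M+C) := mul_nonneg (le_of_lt hK0) (by linarith)
  have habs_of : ∀ x : ℝ, (1/K) * |x| - C ≤ M → |x| ≤ K*(M+C) := by
    intro x hx
    have h1 : (1/K) * |x| ≤ M + C := by linarith
    have h2 := mul_le_mul_of_nonneg_left h1 (le_of_lt hK0)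
    have h3 : K * ((1/K) * |x|) = |x| := by field_simp
    rw [h3] at h2
    linarith
  have key : ∃ i ≤ n, |s - t i| ≤ J := by
    by_cases h0s : s < t 0
    · refine ⟨0, by omega, ?_⟩
      have h1 : d (c 0) (α (t 0)) ≤ M := hkkd 0 (by omega)
      rw [hc0] at h1
      have h2 := hαlow 0 (t 0) ⟨le_rfl, hL₁⟩ (htmem 0)
      have h3 : |0 - t 0| ≤ K*(M+C) := habs_of _ (le_trans h2 h1)
      have h4 : (0:ℝ) ≤ t 0 := (htmem 0).1
      have h5 : |0 - t 0| = t 0 := by rw [zero_sub, abs_neg, abs_of_nonneg h4]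
      have h6 : |s - t 0| = t 0 - s := by
        rw [abs_of_nonpos (by linarith)]; ring
      rw [h6]
      have hs0 : 0 ≤ s := hs.1
      rw [h5] at h3
      linarith
    · push_neg at h0s
      set E := (Finset.range (n+1)).filter (fun i => t i ≤ s) with hE
      have hEne : E.Nonempty :=
        ⟨0, Finset.mem_filter.2 ⟨Finset.mem_range.2 (by omega), h0s⟩⟩
      set i₀ := E.max' hEne with hi₀
      have hi₀mem := E.max'_mem hEne
      have hi₀n : i₀ ≤ n := by
        have := (Finset.mem_filter.1 hi₀mem).1
        have := Finset.mem_range.1 this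
        omega
      have hti₀ : t i₀ ≤ s := (Finset.mem_filter.1 hi₀mem).2
      rcases eq_or_lt_of_le hi₀n with he | hlt
      · refine ⟨i₀, hi₀n, ?_⟩
        have h1 : d (c n) (α (t n)) ≤ M := hkkd n le_rfl
        rw [hcn] at h1
        have h2 := hαlow L₁ (t n) ⟨hL₁, le_rfl⟩ (htmem n)
        have h3 : |L₁ - t n| ≤ K*(M+C) := habs_of _ (le_trans h2 h1)
        have h4 : t n ≤ L₁ := (htmem n).2
        have h5 : |L₁ - t n| = L₁ - t n := abs_of_nonneg (by linarith)
        rw [he]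
        have h6 : |s - t n| = s - t n := abs_of_nonneg (by rw [← he]; linarith)
        rw [h6]
        have hsL : s ≤ L₁ := hs.2
        rw [h5] at h3
        linarith
      · refine ⟨i₀, hi₀n, ?_⟩
        have hnot : ¬ (t (i₀+1) ≤ s) := by
          intro hcon
          have hmem' : i₀+1 ∈ E :=
            Finset.mem_filter.2 ⟨Finset.mem_range.2 (by omega), hcon⟩
          have := Finset.le_max' E (i₀+1) hmem'
          omega
        push_neg at hnot
        have h1 : d (c i₀) (α (t i₀)) ≤ M := hkkd i₀ hi₀n
        have h2 : d (c (i₀+1)) (α (t (i₀+1))) ≤ M := hkkd (i₀+1) (by omega)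
        have h3 : d (c i₀) (c (i₀+1)) = 1 := by
          rw [hgeo i₀ (i₀+1) hi₀n (by omega), abs_cast_sub_of_le (by omega)]
          push_cast; ring
        have h4 : d (α (t i₀)) (α (t (i₀+1))) ≤ 2*M + 1 := by
          have t1 := hd.tri (α (t i₀)) (c i₀) (α (t (i₀+1)))
          have t2 := hd.tri (c i₀) (c (i₀+1)) (α (t (i₀+1)))
          have e1 : d (α (t i₀)) (c i₀) = d (c i₀) (α (t i₀)) := hd.symm _ _
          linarith
        have h5 := hαlow (t i₀) (t (i₀+1)) (htmem i₀) (htmem (i₀+1))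
        have h6 : |t i₀ - t (i₀+1)| ≤ K*(2*M+1+C) := by
          have hx : (1/K) * |t i₀ - t (i₀+1)| ≤ 2*M+1 + C := by linarith
          have h2' := mul_le_mul_of_nonneg_left hx (le_of_lt hK0)
          have h3' : K * ((1/K) * |t i₀ - t (i₀+1)|) = |t i₀ - t (i₀+1)| := by field_simp
          rw [h3'] at h2'
          linarith
        have h7 : |s - t i₀| = s - t i₀ := abs_of_nonneg (by linarith)
        have h8 : t (i₀+1) - t i₀ ≤ |t i₀ - t (i₀+1)| := by
          rw [abs_sub_comm]
          exact le_abs_self _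
        rw [h7]
        linarith
  obtain ⟨i, hin, hsi⟩ := key
  have h1 : d (α s) (α (t i)) ≤ K*J + C := by
    have := hαup s (t i) hs (htmem i)
    have h2 : K * |s - t i| ≤ K * J := mul_le_mul_of_nonneg_left hsi (le_of_lt hK0)
    linarith
  have h2 : d (α (t i)) (c i) ≤ M := by
    rw [hd.symm]
    exact hkkd i hin
  obtain ⟨k', hk', h3⟩ := P1β i hin
  refine ⟨min (k':ℝ) L₂, ⟨le_min (Nat.cast_nonneg _) hL₂, min_le_right _ _⟩, ?_⟩
  have t1 := hd.tri (α s) (α (t i)) (β (min (k':ℝ) L₂))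
  have t2 := hd.tri (α (t i)) (c i) (β (min (k':ℝ) L₂))
  linarith


lemma solve_sqrt (P Q D : ℝ) (hP : 0 ≤ P) (hQ : 0 ≤ Q) (hD : 0 ≤ D)
    (h : D ≤ P * Real.sqrt D + Q) : D ≤ (P + Real.sqrt Q)^2 := by
  by_contra hcon
  push_neg at hcon
  have hs : P + Real.sqrt Q < Real.sqrt D := by
    have := Real.sqrt_lt_sqrt (by positivity) hcon
    rwa [Real.sqrt_sq (by positivity)] at this
  have h0 : (0:ℝ) < Real.sqrt D := lt_of_le_of_lt (by positivity) hs
  have h1 : Real.sqrt D * Real.sqrt D = D := Real.mul_self_sqrt hD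
  have h2 : Real.sqrt Q * Real.sqrt Q = Q := Real.mul_self_sqrt hQ
  have h3 : Real.sqrt D * (P + Real.sqrt Q) < Real.sqrt D * Real.sqrt D :=
    mul_lt_mul_of_pos_left hs h0
  nlinarith [Real.sqrt_nonneg Q, Real.sqrt_nonneg D]

lemma sqrt_add_le' (a b : ℝ) (ha : 0 ≤ a) (hb : 0 ≤ b) :
    Real.sqrt (a + b) ≤ Real.sqrt a + Real.sqrt b := by
  rw [show Real.sqrt a + Real.sqrt b = Real.sqrt ((Real.sqrt a + Real.sqrt b)^2) from
    (Real.sqrt_sq (by positivity)).symm]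
  apply Real.sqrt_le_sqrt
  nlinarith [Real.sq_sqrt ha, Real.sq_sqrt hb, Real.sqrt_nonneg a, Real.sqrt_nonneg b]

lemma exists_M (δ K C : ℝ) (hδ : 0 ≤ δ) (hK : 1 ≤ K) (hC : 0 ≤ C) :
    ∃ M : ℝ, 0 ≤ M ∧ ∀ D : ℝ, 0 ≤ D →
      D ≤ (4*δ+1) * (4 * Real.sqrt ((6*K+2)*D + (2*K+K*C+3))) + (K+C) → D ≤ M := by
  have hKC3 : (0:ℝ) ≤ 2*K+K*C+3 := by nlinarith
  set P := (4*δ+1) * 4 * Real.sqrt (6*K+2) with hP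
  set Q := (4*δ+1) * 4 * Real.sqrt (2*K+K*C+3) + (K+C) with hQ
  have hP0 : 0 ≤ P :=
    mul_nonneg (by linarith) (Real.sqrt_nonneg _)
  have hQ0 : 0 ≤ Q := by
    have := mul_nonneg (show (0:ℝ) ≤ (4*δ+1) * 4 by linarith)
      (Real.sqrt_nonneg (2*K+K*C+3))
    linarith
  refine ⟨(P + Real.sqrt Q)^2, by positivity, ?_⟩
  intro D hD hDle
  have h6K : (0:ℝ) ≤ 6*K+2 := by linarith
  have h1 : Real.sqrt ((6*K+2)*D + (2*K+K*C+3)) ≤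
      Real.sqrt ((6*K+2)*D) + Real.sqrt (2*K+K*C+3) :=
    sqrt_add_le' _ _ (mul_nonneg h6K hD) hKC3
  have h2 : Real.sqrt ((6*K+2)*D) = Real.sqrt (6*K+2) * Real.sqrt D :=
    Real.sqrt_mul h6K D
  have h3 : D ≤ P * Real.sqrt D + Q := by
    have hmul := mul_le_mul_of_nonneg_left
      (show Real.sqrt ((6*K+2)*D + (2*K+K*C+3)) ≤
        Real.sqrt (6*K+2) * Real.sqrt D + Real.sqrt (2*K+K*C+3) by rw [← h2]; linarith)
      (show (0:ℝ) ≤ (4*δ+1) * 4 by linarith)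
    calc D ≤ (4*δ+1) * (4 * Real.sqrt ((6*K+2)*D + (2*K+K*C+3))) + (K+C) := hDle
      _ = (4*δ+1) * 4 * Real.sqrt ((6*K+2)*D + (2*K+K*C+3)) + (K+C) := by ring
      _ ≤ (4*δ+1) * 4 * (Real.sqrt (6*K+2) * Real.sqrt D + Real.sqrt (2*K+K*C+3)) + (K+C) := by
          linarith
      _ = P * Real.sqrt D + Q := by rw [hP, hQ]; ring
  exact solve_sqrt P Q D hP0 hQ0 hD h3

lemma metricLike_wordDist {G : Type*} [Group G] {S : Set G}
    (hS : Subgroup.closure S = ⊤) : MetricLike (wordDist S) :=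
  ⟨wd_symm hS, wd_self, wd_nonneg, wd_triangle hS, wd_chain hS⟩

end TreeNbhd

/-- Images of equivariant based quasi-isometric embeddings of trees for nested subgroups
are uniformly close: the image of the tree of the smaller subgroup lies in a
`D`-neighborhood of the image of the tree of the larger subgroup, with `D` depending only
on `δ`, `K`, `C`. -/
theorem tree_image_in_neighborhood
    (δ K C : ℝ) (hδ : 0 ≤ δ) (hK : 1 ≤ K) (hC : 0 ≤ C) :
    ∃ D : ℝ, 0 ≤ D ∧
      ∀ (G : Type) [Group G] (S : Set G), S.Finite → Subgroup.closure S = ⊤ →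
        IsHyperbolic (wordDist S) δ →
        ∀ (H₁ H₂ : Subgroup G), H₁ ≤ H₂ →
        ∀ (T₁ : Type) [MetricSpace T₁] (T₂ : Type) [MetricSpace T₂],
          IsRTree T₁ → IsRTree T₂ →
          ∀ (t₁ : T₁) (t₂ : T₂) (a₁ : H₁ →* (T₁ ≃ᵢ T₁)) (a₂ : H₂ →* (T₂ ≃ᵢ T₂)),
            (∀ (h : H₁) (t : T₁), a₁ h t = t → h = 1) →
            (∀ (h : H₂) (t : T₂), a₂ h t = t → h = 1) →
            ∀ (f₁ : T₁ → G) (f₂ : T₂ → G),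
              IsQIE (fun x y : T₁ => dist x y) (wordDist S) f₁ K C →
              IsQIE (fun x y : T₂ => dist x y) (wordDist S) f₂ K C →
              (∀ (h : H₁) (t : T₁), f₁ (a₁ h t) = (h : G) * f₁ t) →
              (∀ (h : H₂) (t : T₂), f₂ (a₂ h t) = (h : G) * f₂ t) →
              f₁ t₁ = 1 → f₂ t₂ = 1 →
              (∀ x : T₁, LiesOnOrbitGeodesic a₁ t₁ x) →
              ∀ x : T₁, ∃ y : T₂, wordDist S (f₁ x) (f₂ y) ≤ D := by
  classical
  obtain ⟨M, hM0, hM⟩ := TreeNbhd.exists_M δ K C hδ hK hC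
  refine ⟨K*(K*(2*M+1+C) + K*(M+C)) + C + 2*M, ?_, ?_⟩
  · have h1 : (0:ℝ) ≤ K*(2*M+1+C) := mul_nonneg (by linarith) (by linarith)
    have h2 : (0:ℝ) ≤ K*(M+C) := mul_nonneg (by linarith) (by linarith)
    have h3 : (0:ℝ) ≤ K*(K*(2*M+1+C) + K*(M+C)) := mul_nonneg (by linarith) (by linarith)
    linarith
  intro G _ S _hfin hSgen hhyp H₁ H₂ hle T₁ _ T₂ _ hT₁ hT₂ t₁ t₂ act₁ act₂ _hfree₁ _hfree₂
    f₁ f₂ hqie₁ hqie₂ heqv₁ heqv₂ hb₁ hb₂ horbit x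
  have hd := TreeNbhd.metricLike_wordDist hSgen
  obtain ⟨g, g', γ₁, hseg, s, hs, hγs⟩ := horbit x
  obtain ⟨hγ₁0, hγ₁L, hγ₁iso⟩ := hseg
  set u := act₁ g t₁ with hu
  set v := act₁ g' t₁ with hv
  set L₁ := dist u v with hL₁def
  have hL₁ : 0 ≤ L₁ := dist_nonneg
  set α : ℝ → G := fun r => f₁ (γ₁ r) with hα
  have hαup : ∀ t t', t ∈ Set.Icc (0:ℝ) L₁ → t' ∈ Set.Icc (0:ℝ) L₁ →
      wordDist S (α t) (α t') ≤ K * |t - t'| + C := by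
    intro t t' ht ht'
    have h := (hqie₁ (γ₁ t) (γ₁ t')).2
    rw [← hγ₁iso t t' ht ht']
    exact h
  have hαlow : ∀ t t', t ∈ Set.Icc (0:ℝ) L₁ → t' ∈ Set.Icc (0:ℝ) L₁ →
      (1/K) * |t - t'| - C ≤ wordDist S (α t) (α t') := by
    intro t t' ht ht'
    have h := (hqie₁ (γ₁ t) (γ₁ t')).1
    rw [← hγ₁iso t t' ht ht']
    exact h
  have hα0 : α 0 = (g : G) := by
    show f₁ (γ₁ 0) = (g : G)
    rw [hγ₁0, heqv₁ g t₁, hb₁, mul_one]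
  have hαL : α L₁ = (g' : G) := by
    show f₁ (γ₁ L₁) = (g' : G)
    rw [hγ₁L, heqv₁ g' t₁, hb₁, mul_one]
  set g₂ : H₂ := Subgroup.inclusion hle g with hg₂
  set g₂' : H₂ := Subgroup.inclusion hle g' with hg₂'
  set u₂ := act₂ g₂ t₂ with hu₂
  set v₂ := act₂ g₂' t₂ with hv₂
  obtain ⟨γ₂, hγ₂0, hγ₂L, hγ₂iso⟩ := hT₂.1 u₂ v₂
  set L₂ := dist u₂ v₂ with hL₂def
  have hL₂ : 0 ≤ L₂ := dist_nonneg
  set β : ℝ → G := fun r => f₂ (γ₂ r) with hβ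
  have hβup : ∀ t t', t ∈ Set.Icc (0:ℝ) L₂ → t' ∈ Set.Icc (0:ℝ) L₂ →
      wordDist S (β t) (β t') ≤ K * |t - t'| + C := by
    intro t t' ht ht'
    have h := (hqie₂ (γ₂ t) (γ₂ t')).2
    rw [← hγ₂iso t t' ht ht']
    exact h
  have hβlow : ∀ t t', t ∈ Set.Icc (0:ℝ) L₂ → t' ∈ Set.Icc (0:ℝ) L₂ →
      (1/K) * |t - t'| - C ≤ wordDist S (β t) (β t') := by
    intro t t' ht ht'
    have h := (hqie₂ (γ₂ t) (γ₂ t')).1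
    rw [← hγ₂iso t t' ht ht']
    exact h
  have hβ0 : β 0 = (g : G) := by
    show f₂ (γ₂ 0) = (g : G)
    rw [hγ₂0, hu₂, heqv₂ g₂ t₂, hb₂, mul_one, hg₂, Subgroup.coe_inclusion]
  have hβL : β L₂ = (g' : G) := by
    show f₂ (γ₂ L₂) = (g' : G)
    rw [hγ₂L, hv₂, heqv₂ g₂' t₂, hb₂, mul_one, hg₂', Subgroup.coe_inclusion]
  have hend0 : α 0 = β 0 := by rw [hα0, hβ0]
  have hendL : α L₁ = β L₂ := by rw [hαL, hβL]
  obtain ⟨r, hr, hdist⟩ := TreeNbhd.morse_pair hd hhyp hδ K C M hK hC hM hM0 α β L₁ L₂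
    hL₁ hL₂ hαup hαlow hβup hβlow hend0 hendL s hs
  refine ⟨γ₂ r, ?_⟩
  have hx : f₁ x = α s := by rw [hα]; simp only; rw [hγs]
  rw [hx]
  exact hdist
end

section
/- Let G be a group with a finite generating set S such that the word metric d_S on G is δ-hyperbolic, and let K ≥ 1, C ≥ 0. Then there exist K' ≥ 1 and C' ≥ 0, depending only on δ, K, C, with the following property. Let H₁ ≤ H₂ ≤ G be subgroups, let (T₁,d₁) and (T₂,d₂) be ℝ-trees with basepoints t₁ ∈ T₁, t₂ ∈ T₂, equipped with free actions of H₁ and H₂ respectively by isometries, and let f₁ : T₁ → (G,d_S) and f₂ : T₂ → (G,d_S) be, respectively, an H₁-equivariant and an H₂-equivariant (K,C)-quasi-isometric embedding with f₁(t₁) = 1 and f₂(t₂) = 1. Assume that every point of T₁ lies on a geodesic segment between two points of the orbit H₁·t₁. Then there exists an H₁-equivariant (K',C')-quasi-isometric embedding ψ : T₁ → T₂, where H₁ acts on T₂ via the inclusion H₁ ≤ H₂. -/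
/-!
Every point `x` of `T₁` lies on a geodesic between orbit points `g·t₁` and `g'·t₁`. Since
`f₁ (g·t₁) = g = f₂ (g·t₂)`, the images under `f₁` and `f₂` of the geodesics `[g·t₁, g'·t₁]` and
`[g·t₂, g'·t₂]` are `(K, C)`-quasi-geodesics in `G` with the same endpoints `g`, `g'`. By the Morse
lemma in the `δ`-hyperbolic group `G` both fellow travel a word geodesic from `g` to `g'`, so
`f₁ x` lies within a constant `B(δ, K, C)` of some `f₂ y`. Choosing such a `y` for a representative
of each `H₁`-orbit and extending equivariantly (the action on `T₁` is free) gives `ψ`, which is a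
quasi-isometric embedding because `f₂ ∘ ψ` stays within `B` of the quasi-isometric embedding `f₁`.

The Morse lemma is proved in the discrete setting of the word metric. If a point of a word
geodesic is at maximal distance `D` from the quasi-geodesic, a detour around it has `O(D)` steps
yet stays at distance `D` from it, while in a hyperbolic space a coarse path of `N` steps comes
within `O(δ log N)` of every point of a geodesic with the same endpoints; hence `D = O(log D)`.
-/

open Set

def appendPath {α : Type*} (e₁ : ℕ → α) (n₁ : ℕ) (e₂ : ℕ → α) : ℕ → α :=
  fun j => if j ≤ n₁ then e₁ j else e₂ (j - n₁)

section AppendPath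

variable {α : Type*} {e₁ e₂ : ℕ → α} {n₁ n₂ : ℕ}

theorem appendPath_of_le {j : ℕ} (hj : j ≤ n₁) : appendPath e₁ n₁ e₂ j = e₁ j := if_pos hj

theorem appendPath_add (h : e₁ n₁ = e₂ 0) (j : ℕ) : appendPath e₁ n₁ e₂ (n₁ + j) = e₂ j := by
  rcases Nat.eq_zero_or_pos j with rfl | hj
  · exact (appendPath_of_le le_rfl).trans h
  · simp [appendPath, show ¬n₁ + j ≤ n₁ by omega]

theorem forall_appendPath {P : α → Prop} (h₁ : ∀ j ≤ n₁, P (e₁ j)) (h₂ : ∀ j ≤ n₂, P (e₂ j)) :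
    ∀ j ≤ n₁ + n₂, P (appendPath e₁ n₁ e₂ j) := by
  intro j hj
  unfold appendPath
  split_ifs with h
  exacts [h₁ j h, h₂ _ (by omega)]

end AppendPath

section CoarseGeometry

variable {X : Type*} [PseudoMetricSpace X]

def IsCoarsePath (e : ℕ → X) (n : ℕ) (σ : ℝ) : Prop :=
  ∀ j < n, dist (e j) (e (j + 1)) ≤ σ

structure IsDiscreteGeodesic (c : ℕ → X) (x y : X) (n : ℕ) : Prop where
  apply_zero : c 0 = x
  apply_len : c n = y
  dist_eq : ∀ i ≤ n, ∀ j ≤ n, dist (c i) (c j) = |(i : ℝ) - j|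

def HasDiscreteGeodesics (X : Type*) [PseudoMetricSpace X] : Prop :=
  ∀ x y : X, ∃ (c : ℕ → X) (n : ℕ), IsDiscreteGeodesic c x y n

namespace IsCoarsePath

variable {e : ℕ → X} {n : ℕ} {σ : ℝ}

theorem mono (h : IsCoarsePath e n σ) {τ : ℝ} (hστ : σ ≤ τ) : IsCoarsePath e n τ :=
  fun j hj => (h j hj).trans hστ

theorem of_le_length (h : IsCoarsePath e n σ) {m : ℕ} (hm : m ≤ n) : IsCoarsePath e m σ :=
  fun j hj => h j (hj.trans_le hm)

theorem shift (h : IsCoarsePath e n σ) (k : ℕ) : IsCoarsePath (fun j => e (k + j)) (n - k) σ :=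
  fun j hj => h (k + j) (by omega)

theorem append {e' : ℕ → X} {n' : ℕ} (h : IsCoarsePath e n σ) (h' : IsCoarsePath e' n' σ)
    (hjoin : e n = e' 0) : IsCoarsePath (appendPath e n e') (n + n') σ := by
  intro j hj
  rcases lt_or_ge j n with hjn | hjn
  · rw [appendPath_of_le hjn.le, appendPath_of_le hjn]
    exact h j hjn
  · obtain ⟨k, rfl⟩ := Nat.exists_eq_add_of_le hjn
    rw [add_assoc, appendPath_add hjoin, appendPath_add hjoin]
    exact h' k (by omega)

theorem dist_le (h : IsCoarsePath e n σ) {i j : ℕ} (hij : i ≤ j) (hj : j ≤ n) :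
    dist (e i) (e j) ≤ σ * ((j : ℝ) - i) := by
  induction j, hij using Nat.le_induction with
  | base => simp
  | succ j hij ih =>
    calc dist (e i) (e (j + 1)) ≤ dist (e i) (e j) + dist (e j) (e (j + 1)) := dist_triangle _ _ _
      _ ≤ σ * ((j : ℝ) - i) + σ := add_le_add (ih (by omega)) (h j (by omega))
      _ = σ * (((j + 1 : ℕ) : ℝ) - i) := by push_cast; ring

end IsCoarsePath

namespace IsDiscreteGeodesic

variable {c : ℕ → X} {x y : X} {n : ℕ}

theorem dist_start (h : IsDiscreteGeodesic c x y n) {i : ℕ} (hi : i ≤ n) : dist x (c i) = i := by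
  rw [← h.apply_zero, h.dist_eq 0 (Nat.zero_le n) i hi]
  simp

theorem dist_end (h : IsDiscreteGeodesic c x y n) {i : ℕ} (hi : i ≤ n) :
    dist (c i) y = n - i := by
  rw [← h.apply_len, h.dist_eq i hi n le_rfl, abs_sub_comm, abs_of_nonneg]
  simpa using hi

theorem dist_of_le (h : IsDiscreteGeodesic c x y n) {i j : ℕ} (hij : i ≤ j) (hj : j ≤ n) :
    dist (c i) (c j) = (j : ℝ) - i := by
  rw [h.dist_eq i (hij.trans hj) j hj, abs_sub_comm, abs_of_nonneg (by simpa using hij)]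

theorem dist_eq_len (h : IsDiscreteGeodesic c x y n) : dist x y = n := by
  simpa [h.apply_len] using h.dist_start le_rfl

theorem reverse (h : IsDiscreteGeodesic c x y n) :
    IsDiscreteGeodesic (fun j => c (n - j)) y x n where
  apply_zero := by simpa using h.apply_len
  apply_len := by simpa using h.apply_zero
  dist_eq i hi j hj := by
    rw [h.dist_eq _ (Nat.sub_le n i) _ (Nat.sub_le n j), Nat.cast_sub hi, Nat.cast_sub hj,
      ← abs_neg]
    ring_nf

theorem shift (h : IsDiscreteGeodesic c x y n) {a b : ℕ} (hab : a ≤ b) (hb : b ≤ n) :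
    IsDiscreteGeodesic (fun j => c (a + j)) (c a) (c b) (b - a) where
  apply_zero := rfl
  apply_len := by rw [Nat.add_sub_cancel' hab]
  dist_eq i hi j hj := by
    rw [h.dist_eq _ (by omega) _ (by omega)]
    push_cast
    ring_nf

theorem isCoarsePath (h : IsDiscreteGeodesic c x y n) : IsCoarsePath c n 1 := fun j hj => by
  rw [h.dist_eq j hj.le (j + 1) hj]
  simp

theorem of_isCoarsePath (h0 : c 0 = x) (hn : c n = y) (hc : IsCoarsePath c n 1)
    (hxy : dist x y = n) : IsDiscreteGeodesic c x y n where
  apply_zero := h0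
  apply_len := hn
  dist_eq := by
    suffices key : ∀ i j, i ≤ j → j ≤ n → dist (c i) (c j) = j - i by
      intro i hi j hj
      rcases le_total i j with hij | hji
      · rw [key i j hij hj, abs_sub_comm, abs_of_nonneg (by simpa using hij)]
      · rw [dist_comm, key j i hji hi, abs_of_nonneg (by simpa using hji)]
    intro i j hij hj
    have h₁ := hc.dist_le (Nat.zero_le i) (hij.trans hj)
    have h₂ := hc.dist_le hij hj
    have h₃ := hc.dist_le hj le_rfl
    have := dist_triangle4 (c 0) (c i) (c j) (c n)
    rw [h0, hn, hxy] at this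
    rw [h0] at h₁
    rw [hn] at h₃
    simp only [one_mul, CharP.cast_eq_zero, sub_zero] at h₁ h₂ h₃
    linarith

end IsDiscreteGeodesic

theorem HasDiscreteGeodesics.exists_dist_eq_natCast (hgeo : HasDiscreteGeodesics X) (x y : X) :
    ∃ k : ℕ, dist x y = k :=
  let ⟨_, n, hc⟩ := hgeo x y
  ⟨n, hc.dist_eq_len⟩

theorem HasDiscreteGeodesics.exists_nearest (hgeo : HasDiscreteGeodesics X) (z : X) {A : Set X}
    (hA : A.Nonempty) : ∃ p ∈ A, ∀ q ∈ A, dist z p ≤ dist z q := by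
  classical
  have hex : ∃ k : ℕ, ∃ q ∈ A, dist z q = k := by
    obtain ⟨q, hq⟩ := hA
    obtain ⟨k, hk⟩ := hgeo.exists_dist_eq_natCast z q
    exact ⟨k, q, hq, hk⟩
  obtain ⟨p, hp, hpk⟩ := Nat.find_spec hex
  refine ⟨p, hp, fun q hq => ?_⟩
  obtain ⟨k, hk⟩ := hgeo.exists_dist_eq_natCast z q
  rw [hpk, hk]
  exact_mod_cast Nat.find_min' hex ⟨q, hq, hk⟩

end CoarseGeometry

section WordMetric

variable {G : Type*} [Group G] {S : Set G}

theorem wordLength_prod_le_length {l : List G} (hl : ∀ x ∈ l, x ∈ S ∪ S⁻¹) :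
    wordLength S l.prod ≤ l.length :=
  Nat.sInf_le ⟨l, rfl, hl, rfl⟩

theorem exists_list_length_eq_wordLength (hgen : Subgroup.closure S = ⊤) (g : G) :
    ∃ l : List G, l.length = wordLength S g ∧ (∀ x ∈ l, x ∈ S ∪ S⁻¹) ∧ l.prod = g := by
  have hg : g ∈ Submonoid.closure (S ∪ S⁻¹) := by
    simp [← Subgroup.closure_toSubmonoid, hgen]
  obtain ⟨l, hl, hprod⟩ := Submonoid.exists_list_of_mem_closure hg
  exact Nat.sInf_mem (s := {n | ∃ l : List G, l.length = n ∧ (∀ x ∈ l, x ∈ S ∪ S⁻¹) ∧ l.prod = g})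
    ⟨l.length, l, rfl, hl, hprod⟩

theorem wordLength_one : wordLength S (1 : G) = 0 :=
  Nat.le_zero.1 (wordLength_prod_le_length (l := []) (by simp))

theorem wordLength_mul_le (hgen : Subgroup.closure S = ⊤) (g h : G) :
    wordLength S (g * h) ≤ wordLength S g + wordLength S h := by
  obtain ⟨l, hl, hlS, rfl⟩ := exists_list_length_eq_wordLength hgen g
  obtain ⟨m, hm, hmS, rfl⟩ := exists_list_length_eq_wordLength hgen h
  rw [← hl, ← hm, ← List.length_append, ← List.prod_append]
  exact wordLength_prod_le_length fun x hx => (List.mem_append.1 hx).elim (hlS x) (hmS x)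

theorem wordLength_inv_le (hgen : Subgroup.closure S = ⊤) (g : G) :
    wordLength S g⁻¹ ≤ wordLength S g := by
  obtain ⟨l, hl, hlS, rfl⟩ := exists_list_length_eq_wordLength hgen g
  rw [← hl, List.prod_inv_reverse, ← List.length_map (f := fun x : G => x⁻¹),
    ← List.length_reverse]
  refine wordLength_prod_le_length fun x hx => ?_
  obtain ⟨y, hy, rfl⟩ := List.mem_map.1 (List.mem_reverse.1 hx)
  simpa [or_comm] using hlS y hy

theorem wordLength_inv (hgen : Subgroup.closure S = ⊤) (g : G) :
    wordLength S g⁻¹ = wordLength S g :=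
  le_antisymm (wordLength_inv_le hgen g) (by simpa using wordLength_inv_le hgen g⁻¹)

theorem wordDist_mul_left (k g h : G) : wordDist S (k * g) (k * h) = wordDist S g h := by
  simp [wordDist, mul_assoc]

@[reducible] noncomputable def wordPseudoMetricSpace (hgen : Subgroup.closure S = ⊤) :
    PseudoMetricSpace G where
  dist := wordDist S
  dist_self g := by simp [wordDist, wordLength_one]
  dist_comm g h := by
    rw [wordDist, wordDist, ← wordLength_inv hgen, mul_inv_rev, inv_inv]
  dist_triangle g k h := by
    simp only [wordDist]
    rw [show g⁻¹ * h = (g⁻¹ * k) * (k⁻¹ * h) by group]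
    exact_mod_cast wordLength_mul_le hgen _ _

theorem hasDiscreteGeodesics_wordPseudoMetricSpace (hgen : Subgroup.closure S = ⊤) :
    letI := wordPseudoMetricSpace hgen
    HasDiscreteGeodesics G := by
  let _ := wordPseudoMetricSpace hgen
  intro g h
  obtain ⟨l, hl, hlS, hprod⟩ := exists_list_length_eq_wordLength hgen (g⁻¹ * h)
  refine ⟨fun i => g * (l.take i).prod, l.length,
    IsDiscreteGeodesic.of_isCoarsePath (by simp) (by simp [hprod]) (fun i hi => ?_) ?_⟩
  · change wordDist S _ _ ≤ 1
    rw [wordDist_mul_left, wordDist, List.prod_take_succ l i hi, inv_mul_cancel_left]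
    have : wordLength S l[i] ≤ 1 := by
      simpa using wordLength_prod_le_length (S := S) (l := [l[i]])
        (by simpa using hlS _ (l.getElem_mem hi))
    exact_mod_cast this
  · change (wordLength S (g⁻¹ * h) : ℝ) = _
    rw [hl]

end WordMetric

section Hyperbolic

variable {X : Type*} [PseudoMetricSpace X] {δ : ℝ}

noncomputable def gromovProduct (w x y : X) : ℝ := (dist w x + dist w y - dist x y) / 2

theorem gromovProduct_add_gromovProduct (x y z : X) :
    gromovProduct x y z + gromovProduct y x z = dist x y := by
  simp only [gromovProduct, dist_comm y x]
  ring

theorem IsHyperbolic.nonneg (h : IsHyperbolic (dist : X → X → ℝ) δ) (x : X) : 0 ≤ δ := by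
  simpa using h x x x x

theorem IsHyperbolic.min_sub_le_gromovProduct (h : IsHyperbolic (dist : X → X → ℝ) δ)
    (w x y z : X) :
    min (gromovProduct w x z) (gromovProduct w z y) - δ ≤ gromovProduct w x y := by
  have h4 := h x y z w
  have m₁ := min_le_left (gromovProduct w x z) (gromovProduct w z y)
  have m₂ := min_le_right (gromovProduct w x z) (gromovProduct w z y)
  simp only [gromovProduct] at m₁ m₂ ⊢
  rw [dist_comm w x, dist_comm w y, dist_comm w z, dist_comm z y] at *
  rcases le_total (dist x z + dist y w) (dist x w + dist y z) with hle | hle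
  · rw [max_eq_right hle] at h4
    linarith
  · rw [max_eq_left hle] at h4
    linarith

variable (hhyp : IsHyperbolic (dist : X → X → ℝ) δ)
include hhyp

theorem IsDiscreteGeodesic.dist_le_of_le_gromovProduct {c c' : ℕ → X} {x y z : X} {n m i : ℕ}
    (hc : IsDiscreteGeodesic c x y n) (hc' : IsDiscreteGeodesic c' x z m) (hi : i ≤ n)
    (hiP : (i : ℝ) ≤ gromovProduct x y z) : i ≤ m ∧ dist (c i) (c' i) ≤ 4 * δ := by
  have hδ := hhyp.nonneg x
  have him : i ≤ m := by
    have : gromovProduct x y z ≤ dist x z := by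
      have := dist_triangle x z y
      rw [dist_comm z y] at this
      simp only [gromovProduct]
      linarith
    exact_mod_cast hiP.trans (this.trans hc'.dist_eq_len.le)
  refine ⟨him, ?_⟩
  have h₁ : gromovProduct x z (c' i) = i := by
    simp only [gromovProduct, hc'.dist_eq_len, hc'.dist_start him, dist_comm z, hc'.dist_end him]
    ring
  have h₂ : gromovProduct x (c i) y = i := by
    simp only [gromovProduct, hc.dist_eq_len, hc.dist_start hi, hc.dist_end hi]
    ring
  have s₁ := hhyp.min_sub_le_gromovProduct x y (c' i) z
  rw [h₁, min_eq_right hiP] at s₁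
  have s₂ := hhyp.min_sub_le_gromovProduct x (c i) (c' i) y
  rw [h₂] at s₂
  have s₃ := le_min (show (i : ℝ) - δ ≤ i by linarith) s₁
  have key : (i : ℝ) - 2 * δ ≤ gromovProduct x (c i) (c' i) := by linarith
  simp only [gromovProduct, hc.dist_start hi, hc'.dist_start him] at key
  linarith

theorem IsDiscreteGeodesic.exists_dist_le_of_triangle {c c₁ c₂ : ℕ → X} {x y z : X}
    {n n₁ n₂ i : ℕ} (hc : IsDiscreteGeodesic c x y n) (hc₁ : IsDiscreteGeodesic c₁ x z n₁)
    (hc₂ : IsDiscreteGeodesic c₂ z y n₂) (hi : i ≤ n) :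
    (∃ j ≤ n₁, dist (c i) (c₁ j) ≤ 4 * δ) ∨ ∃ j ≤ n₂, dist (c i) (c₂ j) ≤ 4 * δ := by
  by_cases hiP : (i : ℝ) ≤ gromovProduct x y z
  · obtain ⟨hle, hd⟩ := hc.dist_le_of_le_gromovProduct hhyp hc₁ hi hiP
    exact .inl ⟨i, hle, hd⟩
  · have hiP' : ((n - i : ℕ) : ℝ) ≤ gromovProduct y x z := by
      have := gromovProduct_add_gromovProduct x y z
      rw [hc.dist_eq_len] at this
      push_cast [Nat.cast_sub hi]
      linarith
    obtain ⟨hle, hd⟩ :=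
      hc.reverse.dist_le_of_le_gromovProduct hhyp hc₂.reverse (Nat.sub_le n i) hiP'
    rw [Nat.sub_sub_self hi] at hd
    exact .inr ⟨n₂ - (n - i), Nat.sub_le _ _, hd⟩

-- Bisect the path at its midpoint: by thin triangles each level of the bisection costs `4δ`.
theorem IsCoarsePath.exists_dist_le_of_isDiscreteGeodesic (hgeo : HasDiscreteGeodesics X)
    {σ : ℝ} (hσ : 0 ≤ σ) (k : ℕ) {e : ℕ → X} {n : ℕ} (hn : n ≤ 2 ^ k)
    (he : IsCoarsePath e n σ) {c : ℕ → X} {m : ℕ} (hc : IsDiscreteGeodesic c (e 0) (e n) m)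
    {i : ℕ} (hi : i ≤ m) : ∃ j ≤ n, dist (c i) (e j) ≤ 4 * δ * k + σ := by
  induction k generalizing e n c m i with
  | zero =>
    refine ⟨0, Nat.zero_le n, ?_⟩
    have hend : dist (e 0) (e n) ≤ σ := by
      interval_cases n
      · simpa using hσ
      · exact he 0 one_pos
    rw [dist_comm, hc.dist_start hi, Nat.cast_zero, mul_zero, zero_add]
    have : (i : ℝ) ≤ m := by exact_mod_cast hi
    linarith [hc.dist_eq_len]
  | succ k ih =>
    rw [pow_succ] at hn
    obtain ⟨c₁, m₁, hc₁⟩ := hgeo (e 0) (e (n / 2))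
    obtain ⟨c₂, m₂, hc₂⟩ := hgeo (e (n / 2)) (e n)
    have hstep : ∀ w : X, ∀ j : ℕ, dist (c i) w ≤ 4 * δ → dist w (e j) ≤ 4 * δ * k + σ →
        dist (c i) (e j) ≤ 4 * δ * ↑(k + 1) + σ := fun w j h₁ h₂ => by
      push_cast
      linarith [dist_triangle (c i) w (e j)]
    rcases hc.exists_dist_le_of_triangle hhyp hc₁ hc₂ hi with ⟨j, hj, hd⟩ | ⟨j, hj, hd⟩
    · obtain ⟨j', hj', hd'⟩ := ih (by omega) (he.of_le_length (Nat.div_le_self n 2)) hc₁ hj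
      exact ⟨j', by omega, hstep _ _ hd hd'⟩
    · have hc₂' : IsDiscreteGeodesic c₂ ((fun j => e (n / 2 + j)) 0)
          ((fun j => e (n / 2 + j)) (n - n / 2)) m₂ := by
        simpa [Nat.add_sub_cancel' (Nat.div_le_self n 2)] using hc₂
      obtain ⟨j', hj', hd'⟩ := ih (by omega) (he.shift (n / 2)) hc₂' hj
      exact ⟨n / 2 + j', by omega, hstep _ _ hd hd'⟩

end Hyperbolic

theorem clog_two_le_four_mul_sqrt (n : ℕ) : (Nat.clog 2 n : ℝ) ≤ 4 * √n + 1 := by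
  rcases le_or_gt n 1 with hn | hn
  · rw [Nat.clog_of_right_le_one hn, Nat.cast_zero]
    positivity
  have hn0 : (0 : ℝ) < n := by exact_mod_cast (by omega : 0 < n)
  have hpow : ((2 ^ (Nat.clog 2 n - 1) : ℕ) : ℝ) < n := by
    exact_mod_cast Nat.pow_pred_clog_lt_self one_lt_two hn
  have hlog : ((Nat.clog 2 n - 1 : ℕ) : ℝ) * Real.log 2 ≤ Real.log n := by
    rw [← Real.log_pow, ← Nat.cast_ofNat, ← Nat.cast_pow]
    exact Real.log_le_log (by positivity) hpow.le
  have hsqrt : Real.log n ≤ 2 * √n := by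
    have := Real.log_le_sub_one_of_pos (Real.sqrt_pos.2 hn0)
    rw [Real.log_sqrt hn0.le] at this
    linarith
  have hpos : 0 < Nat.clog 2 n := Nat.clog_pos one_lt_two hn
  have hlog2 : (1 : ℝ) / 2 ≤ Real.log 2 := by linarith [Real.log_two_gt_d9]
  push_cast [Nat.cast_sub hpos] at hlog
  nlinarith [Real.sqrt_nonneg (n : ℝ)]

theorem le_of_le_mul_sqrt_add {D E A B F : ℝ} (hD : 0 ≤ D) (hA : 0 ≤ A)
    (hB : 0 ≤ B) (hF : 1 ≤ F) (h : D ≤ E * √(A * D + B) + F) :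
    D ≤ 1 + 2 * F + E ^ 2 * (A + B) := by
  by_contra! hcon
  have hD1 : 1 ≤ D := by nlinarith [sq_nonneg E]
  have hsq : (D - F) ^ 2 ≤ E ^ 2 * (A * D + B) := by
    rw [← Real.sq_sqrt (by positivity : 0 ≤ A * D + B), ← mul_pow]
    exact pow_le_pow_left₀ (by nlinarith [sq_nonneg E]) (by linarith) 2
  have : E ^ 2 * (A * D + B) ≤ E ^ 2 * (A + B) * D := by
    nlinarith [mul_nonneg (sq_nonneg E) hB]
  nlinarith [mul_nonneg (sq_nonneg E) (add_nonneg hA hB)]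

theorem le_of_le_mul_clog {D E A B F : ℝ} {N : ℕ} (hD : 0 ≤ D) (hE : 0 ≤ E) (hA : 0 ≤ A)
    (hB : 0 ≤ B) (hF : 1 ≤ F) (hN : (N : ℝ) ≤ A * D + B) (h : D ≤ E * Nat.clog 2 N + F) :
    D ≤ 1 + 2 * (E + F) + (4 * E) ^ 2 * (A + B) := by
  refine le_of_le_mul_sqrt_add hD hA hB (by linarith) ?_
  have h₁ := mul_le_mul_of_nonneg_left (clog_two_le_four_mul_sqrt N) hE
  have h₂ := mul_le_mul_of_nonneg_left (Real.sqrt_le_sqrt hN) hE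
  linarith

section Morse

variable {X : Type*} [PseudoMetricSpace X]

def IsCoarselyConnected (A : Set X) (σ κ μ : ℝ) : Prop :=
  ∀ p ∈ A, ∀ q ∈ A, ∃ (e : ℕ → X) (N : ℕ), e 0 = p ∧ e N = q ∧ IsCoarsePath e N σ ∧
    (∀ j ≤ N, e j ∈ A) ∧ (N : ℝ) ≤ κ * dist p q + μ

theorem IsDiscreteGeodesic.le_dist_of_far {A : Set X} {z q p : X} {c : ℕ → X} {m : ℕ} {D : ℝ}
    (hc : IsDiscreteGeodesic c q p m) (hp : p ∈ A) (hm : (m : ℝ) ≤ D)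
    (hzA : ∀ a ∈ A, D ≤ dist z a) (hq : 2 * D ≤ dist z q ∨ m = 0) {j : ℕ} (hj : j ≤ m) :
    D ≤ dist z (c j) := by
  rcases hq with hq | rfl
  · have := dist_triangle z (c j) q
    rw [dist_comm (c j), hc.dist_start hj] at this
    have : (j : ℝ) ≤ m := by exact_mod_cast hj
    linarith
  · obtain rfl : j = 0 := by omega
    exact hc.apply_len ▸ hzA p hp

variable {A : Set X} {σ κ μ : ℝ}

theorem IsCoarselyConnected.exists_coarsePath_avoiding (hA : IsCoarselyConnected A σ κ μ)
    (hgeo : HasDiscreteGeodesics X) (hσ : 1 ≤ σ) {z q₁ q₂ p₁ p₂ : X} {D : ℝ} (hp₁ : p₁ ∈ A)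
    (hp₂ : p₂ ∈ A) (hzA : ∀ a ∈ A, D ≤ dist z a) (hD₁ : dist q₁ p₁ ≤ D) (hD₂ : dist q₂ p₂ ≤ D)
    (hq₁ : 2 * D ≤ dist z q₁ ∨ dist q₁ p₁ = 0) (hq₂ : 2 * D ≤ dist z q₂ ∨ dist q₂ p₂ = 0) :
    ∃ (e : ℕ → X) (N : ℕ), e 0 = q₁ ∧ e N = q₂ ∧ IsCoarsePath e N σ ∧
      (∀ j ≤ N, D ≤ dist z (e j)) ∧ (N : ℝ) ≤ 2 * D + κ * dist p₁ p₂ + μ := by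
  obtain ⟨c₁, m₁, hc₁⟩ := hgeo q₁ p₁
  obtain ⟨e₂, N₂, he₂0, he₂N, he₂, he₂A, hN₂⟩ := hA p₁ hp₁ p₂ hp₂
  obtain ⟨c₃, m₃, hc₃⟩ := hgeo q₂ p₂
  have hm₁ := hc₁.dist_eq_len
  have hm₃ := hc₃.dist_eq_len
  have hjoin₁ : c₁ m₁ = e₂ 0 := hc₁.apply_len.trans he₂0.symm
  have hjoin₂ : appendPath c₁ m₁ e₂ (m₁ + N₂) = c₃ (m₃ - 0) := by
    rw [appendPath_add hjoin₁, he₂N, Nat.sub_zero, hc₃.apply_len]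
  refine ⟨appendPath (appendPath c₁ m₁ e₂) (m₁ + N₂) (fun j => c₃ (m₃ - j)), m₁ + N₂ + m₃,
    ?_, ?_, ?_, ?_, ?_⟩
  · rw [appendPath_of_le (Nat.zero_le _), appendPath_of_le (Nat.zero_le _), hc₁.apply_zero]
  · rw [appendPath_add hjoin₂, Nat.sub_self, hc₃.apply_zero]
  · exact ((hc₁.isCoarsePath.mono hσ).append he₂ hjoin₁).append
      (hc₃.reverse.isCoarsePath.mono hσ) hjoin₂
  · have hfar₁ : ∀ j ≤ m₁, D ≤ dist z (c₁ j) :=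
      fun j => hc₁.le_dist_of_far hp₁ (hm₁ ▸ hD₁) hzA (hq₁.imp_right fun h => by
        exact_mod_cast hm₁ ▸ h)
    have hfar₃ : ∀ j ≤ m₃, D ≤ dist z (c₃ (m₃ - j)) :=
      fun j _ => hc₃.le_dist_of_far hp₂ (hm₃ ▸ hD₂) hzA (hq₂.imp_right fun h => by
        exact_mod_cast hm₃ ▸ h) (Nat.sub_le m₃ j)
    exact forall_appendPath (P := fun w => D ≤ dist z w)
      (forall_appendPath (P := fun w => D ≤ dist z w) hfar₁ fun j hj => hzA _ (he₂A j hj)) hfar₃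
  · push_cast
    linarith

theorem dist_eq_zero_of_forall_le {A : Set X} {q p : X} (hq : q ∈ A)
    (hp : ∀ a ∈ A, dist q p ≤ dist q a) : dist q p = 0 :=
  le_antisymm (by simpa using hp q hq) dist_nonneg

theorem IsCoarselyConnected.le_clog_of_farthest {δ : ℝ}
    (hhyp : IsHyperbolic (dist : X → X → ℝ) δ) (hgeo : HasDiscreteGeodesics X)
    (hA : IsCoarselyConnected A σ κ μ) (hσ : 1 ≤ σ) (hκ : 0 ≤ κ) {c : ℕ → X} {x y : X}
    {n : ℕ} (hc : IsDiscreteGeodesic c x y n) (hx : x ∈ A) (hy : y ∈ A) {p : ℕ → X}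
    (hpA : ∀ i, p i ∈ A) (hp : ∀ i, ∀ a ∈ A, dist (c i) (p i) ≤ dist (c i) a) {i₀ D : ℕ}
    (hi₀ : i₀ ≤ n) (hD : dist (c i₀) (p i₀) = D) (hmax : ∀ i ≤ n, dist (c i) (p i) ≤ D) :
    ∃ N : ℕ, (N : ℝ) ≤ (6 * κ + 2) * D + μ ∧ (D : ℝ) ≤ 4 * δ * Nat.clog 2 N + σ := by
  set a := i₀ - 2 * D
  set b := min (i₀ + 2 * D) n
  have hab : a ≤ b := by omega
  have ha : 2 * (D : ℝ) ≤ dist (c i₀) (c a) ∨ dist (c a) (p a) = 0 := by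
    by_cases h : 2 * D ≤ i₀
    · left
      rw [dist_comm, hc.dist_of_le (by omega) hi₀, Nat.cast_sub h]
      push_cast
      linarith
    · right
      rw [show a = 0 by omega]
      exact dist_eq_zero_of_forall_le (hc.apply_zero ▸ hx) (hp 0)
  have hb : 2 * (D : ℝ) ≤ dist (c i₀) (c b) ∨ dist (c b) (p b) = 0 := by
    by_cases h : i₀ + 2 * D ≤ n
    · left
      rw [hc.dist_of_le (by omega) (by omega), show b = i₀ + 2 * D by omega]
      push_cast
      linarith
    · right
      rw [show b = n by omega]
      exact dist_eq_zero_of_forall_le (hc.apply_len ▸ hy) (hp n)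
  obtain ⟨e, N, he0, heN, he, hfar, hN⟩ :=
    hA.exists_coarsePath_avoiding hgeo hσ (hpA a) (hpA b) (fun q hq => hD ▸ hp i₀ q hq)
      (hmax a (by omega)) (hmax b (by omega)) ha hb
  refine ⟨N, ?_, ?_⟩
  · have hpab : dist (p a) (p b) ≤ 6 * D := by
      have := dist_triangle4 (p a) (c a) (c b) (p b)
      rw [dist_comm (p a) (c a), hc.dist_of_le hab (by omega)] at this
      have := hmax a (by omega)
      have := hmax b (by omega)
      have : (b : ℝ) - a ≤ 4 * D := by
        rw [← Nat.cast_sub hab]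
        exact_mod_cast (by omega : b - a ≤ 4 * D)
      linarith
    nlinarith
  · have hc' : IsDiscreteGeodesic (fun j => c (a + j)) (e 0) (e N) (b - a) := by
      rw [he0, heN]
      exact hc.shift hab (by omega)
    obtain ⟨j, hj, hdj⟩ := he.exists_dist_le_of_isDiscreteGeodesic hhyp hgeo (by linarith)
      (Nat.clog 2 N) (Nat.le_pow_clog one_lt_two N) hc' (i := i₀ - a) (by omega)
    rw [Nat.add_sub_cancel' (by omega : a ≤ i₀)] at hdj
    exact (hfar j hj).trans hdj

-- The bound of `le_of_le_mul_clog` for `E = 4δ`, `A = 6κ + 2`, `B = μ`, `F = σ`.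
noncomputable def morseBound (δ σ κ μ : ℝ) : ℝ :=
  1 + 2 * (4 * δ + σ) + (16 * δ) ^ 2 * (6 * κ + 2 + μ)

theorem morseBound_nonneg {δ : ℝ} (hδ : 0 ≤ δ) (hσ : 0 ≤ σ) (hκ : 0 ≤ κ) (hμ : 0 ≤ μ) :
    0 ≤ morseBound δ σ κ μ := by
  unfold morseBound
  positivity

theorem IsCoarselyConnected.exists_dist_le_of_isDiscreteGeodesic {δ : ℝ}
    (hhyp : IsHyperbolic (dist : X → X → ℝ) δ) (hgeo : HasDiscreteGeodesics X)
    (hA : IsCoarselyConnected A σ κ μ) (hσ : 1 ≤ σ) (hκ : 0 ≤ κ) (hμ : 0 ≤ μ) {c : ℕ → X}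
    {x y : X} {n : ℕ} (hc : IsDiscreteGeodesic c x y n) (hx : x ∈ A) (hy : y ∈ A) {i : ℕ}
    (hi : i ≤ n) : ∃ a ∈ A, dist (c i) a ≤ morseBound δ σ κ μ := by
  choose p hpA hp using fun i => hgeo.exists_nearest (c i) ⟨x, hx⟩
  obtain ⟨i₀, hi₀, hmax⟩ := Finset.exists_max_image (Finset.range (n + 1))
    (fun i => dist (c i) (p i)) ⟨0, by simp⟩
  simp only [Finset.mem_range, Nat.lt_succ_iff] at hi₀ hmax
  obtain ⟨D, hD⟩ := hgeo.exists_dist_eq_natCast (c i₀) (p i₀)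
  rw [hD] at hmax
  obtain ⟨N, hN, hDN⟩ := hA.le_clog_of_farthest hhyp hgeo hσ hκ hc hx hy hpA hp hi₀ hD hmax
  have hδ := hhyp.nonneg x
  have := le_of_le_mul_clog (Nat.cast_nonneg D) (by positivity) (by positivity) hμ hσ hN hDN
  refine ⟨p i, hpA i, (hmax i hi).trans (this.trans_eq ?_)⟩
  unfold morseBound
  ring

end Morse

theorem le_mul_add_of_one_div_mul_sub_le {K C a b : ℝ} (hK : 0 < K) (h : 1 / K * a - C ≤ b) :
    a ≤ K * (b + C) := by
  have := mul_le_mul_of_nonneg_left (show 1 / K * a ≤ b + C by linarith) hK.le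
  rwa [← mul_assoc, mul_one_div_cancel hK.ne', one_mul] at this

section QuasiGeodesic

variable {X : Type*} [PseudoMetricSpace X] {K C : ℝ}

def IsQuasiGeodesicOn (γ : ℝ → X) (L K C : ℝ) : Prop :=
  ∀ s ∈ Icc (0 : ℝ) L, ∀ t ∈ Icc (0 : ℝ) L,
    1 / K * |s - t| - C ≤ dist (γ s) (γ t) ∧ dist (γ s) (γ t) ≤ K * |s - t| + C

theorem IsGeodesicSegment.isQuasiGeodesicOn_comp {T : Type*} [MetricSpace T] {γ : ℝ → T}
    {x y : T} (hγ : IsGeodesicSegment γ x y) {f : T → X}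
    (hf : IsQIE (fun a b : T => dist a b) (fun a b : X => dist a b) f K C) :
    IsQuasiGeodesicOn (f ∘ γ) (dist x y) K C := fun s hs t ht => by
  simpa only [Function.comp, hγ.2.2 s t hs ht] using hf (γ s) (γ t)

namespace IsQuasiGeodesicOn

variable {γ : ℝ → X} {L : ℝ}

theorem isCoarselyConnected (hK : 0 < K) (hγ : IsQuasiGeodesicOn γ L K C) :
    IsCoarselyConnected (γ '' Icc 0 L) (K + C) K (K * C + 1) := by
  rintro _ ⟨s, hs, rfl⟩ _ ⟨t, ht, rfl⟩
  set N := ⌈|t - s|⌉₊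
  have hN : |t - s| ≤ N := Nat.le_ceil _
  have hmem : ∀ j ≤ N, s + (j / N : ℝ) * (t - s) ∈ Icc (0 : ℝ) L := fun j hj =>
    (convex_Icc (0 : ℝ) L).add_smul_sub_mem hs ht (t := (j / N : ℝ))
      ⟨by positivity, div_le_one_of_le₀ (by exact_mod_cast hj) (Nat.cast_nonneg _)⟩
  refine ⟨fun j => γ (s + (j / N : ℝ) * (t - s)), N, by simp, ?_, fun j hj => ?_,
    fun j hj => ⟨_, hmem j hj, rfl⟩, ?_⟩
  · rcases eq_or_ne (N : ℝ) 0 with h0 | h0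
    · have : t - s = 0 := abs_nonpos_iff.1 (h0 ▸ hN)
      simp [show t = s by linarith]
    · simp [h0]
  · have hN0 : (0 : ℝ) < N := by exact_mod_cast (by omega : 0 < N)
    have hstep : |s + j / N * (t - s) - (s + ↑(j + 1) / N * (t - s))| ≤ 1 := by
      rw [show s + j / N * (t - s) - (s + ↑(j + 1) / N * (t - s)) = -((t - s) / N) by
        push_cast; field_simp; ring, abs_neg, abs_div, abs_of_pos hN0]
      exact div_le_one_of_le₀ hN hN0.le
    refine (hγ _ (hmem j hj.le) _ (hmem (j + 1) hj)).2.trans ?_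
    nlinarith
  · have h₁ : (N : ℝ) < |t - s| + 1 := Nat.ceil_lt_add_one (abs_nonneg _)
    have h₂ := le_mul_add_of_one_div_mul_sub_le hK (hγ s hs t ht).1
    rw [abs_sub_comm] at h₁
    linarith

theorem exists_dist_le_of_isDiscreteGeodesic {δ : ℝ}
    (hhyp : IsHyperbolic (dist : X → X → ℝ) δ) (hgeo : HasDiscreteGeodesics X) (hK : 1 ≤ K)
    (hC : 0 ≤ C) (hL : 0 ≤ L) (hγ : IsQuasiGeodesicOn γ L K C) {c : ℕ → X} {n : ℕ}
    (hc : IsDiscreteGeodesic c (γ 0) (γ L) n) {i : ℕ} (hi : i ≤ n) :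
    ∃ u ∈ Icc 0 L, dist (c i) (γ u) ≤ morseBound δ (K + C) K (K * C + 1) := by
  obtain ⟨_, ⟨u, hu, rfl⟩, h⟩ :=
    (hγ.isCoarselyConnected (by linarith)).exists_dist_le_of_isDiscreteGeodesic hhyp hgeo
      (by linarith) (by linarith) (by positivity) hc ⟨0, ⟨le_rfl, hL⟩, rfl⟩
      ⟨L, ⟨hL, le_rfl⟩, rfl⟩ hi
  exact ⟨u, hu, h⟩

end IsQuasiGeodesicOn

theorem IsDiscreteGeodesic.exists_near_before_after {γ : ℝ → X} {L D s : ℝ} {c : ℕ → X}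
    {n : ℕ} (hc : IsDiscreteGeodesic c (γ 0) (γ L) n)
    (hnear : ∀ i ≤ n, ∃ u ∈ Icc 0 L, dist (c i) (γ u) ≤ D) (hs : s ∈ Icc 0 L) :
    ∃ i ≤ n, ∃ u ∈ Icc 0 s, ∃ v ∈ Icc s L, dist (c i) (γ u) ≤ D ∧ dist (c i) (γ v) ≤ D + 1 := by
  classical
  have hD : 0 ≤ D := by
    obtain ⟨_, _, h⟩ := hnear 0 (Nat.zero_le n)
    exact dist_nonneg.trans h
  let P : ℕ → Prop := fun i => ∃ u ∈ Icc 0 s, dist (c i) (γ u) ≤ D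
  have hP0 : P 0 := ⟨0, ⟨le_rfl, hs.1⟩, by rwa [hc.apply_zero, dist_self]⟩
  obtain ⟨u, hu, hdu⟩ := Nat.findGreatest_spec (Nat.zero_le n) hP0
  refine ⟨Nat.findGreatest P n, Nat.findGreatest_le n, u, hu, ?_⟩
  rcases (Nat.findGreatest_le (P := P) n).lt_or_eq with hlt | heq
  · obtain ⟨v, hv, hdv⟩ := hnear _ hlt
    have hsv : s ≤ v := by
      by_contra! h
      exact Nat.findGreatest_is_greatest (Nat.lt_succ_self _) hlt ⟨v, ⟨hv.1, h.le⟩, hdv⟩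
    refine ⟨v, ⟨hsv, hv.2⟩, hdu, ?_⟩
    linarith [dist_triangle (c (Nat.findGreatest P n)) (c (Nat.findGreatest P n + 1)) (γ v),
      hc.isCoarsePath _ hlt]
  · refine ⟨L, ⟨hs.2, le_rfl⟩, hdu, ?_⟩
    rw [heq, hc.apply_len, dist_self]
    linarith

theorem IsQuasiGeodesicOn.exists_dist_le_of_forall_exists_dist_le {γ : ℝ → X} {L D s : ℝ}
    (hK : 0 < K) (hγ : IsQuasiGeodesicOn γ L K C) {c : ℕ → X} {n : ℕ}
    (hc : IsDiscreteGeodesic c (γ 0) (γ L) n)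
    (hnear : ∀ i ≤ n, ∃ u ∈ Icc 0 L, dist (c i) (γ u) ≤ D) (hs : s ∈ Icc 0 L) :
    ∃ i ≤ n, dist (γ s) (c i) ≤ D + K * (K * (2 * D + 1 + C)) + C := by
  obtain ⟨i, hi, u, hu, v, hv, hdu, hdv⟩ := hc.exists_near_before_after hnear hs
  have huL : u ∈ Icc 0 L := ⟨hu.1, hu.2.trans hs.2⟩
  have hvL : v ∈ Icc 0 L := ⟨hs.1.trans hv.1, hv.2⟩
  have huv : |u - v| ≤ K * (2 * D + 1 + C) := by
    refine (le_mul_add_of_one_div_mul_sub_le hK (hγ u huL v hvL).1).trans ?_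
    gcongr
    linarith [dist_triangle_left (γ u) (γ v) (c i)]
  have hsu : |s - u| ≤ |u - v| := by
    rw [abs_of_nonneg (by linarith [hu.2]), abs_of_nonpos (by linarith [hu.2, hv.1])]
    linarith [hv.1]
  refine ⟨i, hi, ?_⟩
  calc dist (γ s) (c i) ≤ dist (γ s) (γ u) + dist (γ u) (c i) := dist_triangle _ _ _
    _ ≤ K * |s - u| + C + D := add_le_add (hγ s hs u huL).2 (by rwa [dist_comm])
    _ ≤ D + K * (K * (2 * D + 1 + C)) + C := by nlinarith

noncomputable def fellowTravelBound (δ K C : ℝ) : ℝ :=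
  2 * morseBound δ (K + C) K (K * C + 1) +
    K * (K * (2 * morseBound δ (K + C) K (K * C + 1) + 1 + C)) + C

theorem fellowTravelBound_nonneg {δ : ℝ} (hδ : 0 ≤ δ) (hK : 0 ≤ K) (hC : 0 ≤ C) :
    0 ≤ fellowTravelBound δ K C := by
  have := morseBound_nonneg hδ (add_nonneg hK hC) hK (by positivity : 0 ≤ K * C + 1)
  unfold fellowTravelBound
  positivity

variable {δ : ℝ} (hhyp : IsHyperbolic (dist : X → X → ℝ) δ) (hgeo : HasDiscreteGeodesics X)
include hhyp hgeo

theorem IsQuasiGeodesicOn.exists_dist_le_of_endpoints (hK : 1 ≤ K) (hC : 0 ≤ C)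
    {γ₁ γ₂ : ℝ → X} {L₁ L₂ s : ℝ} (h₁ : IsQuasiGeodesicOn γ₁ L₁ K C)
    (h₂ : IsQuasiGeodesicOn γ₂ L₂ K C) (hL₂ : 0 ≤ L₂) (h0 : γ₁ 0 = γ₂ 0) (hL : γ₁ L₁ = γ₂ L₂)
    (hs : s ∈ Icc 0 L₁) : ∃ u ∈ Icc 0 L₂, dist (γ₁ s) (γ₂ u) ≤ fellowTravelBound δ K C := by
  obtain ⟨c, n, hc⟩ := hgeo (γ₁ 0) (γ₁ L₁)
  have hc₂ : IsDiscreteGeodesic c (γ₂ 0) (γ₂ L₂) n := by rwa [← h0, ← hL]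
  obtain ⟨i, hi, hdi⟩ := h₁.exists_dist_le_of_forall_exists_dist_le (by linarith) hc
    (fun i hi => h₁.exists_dist_le_of_isDiscreteGeodesic hhyp hgeo hK hC (hs.1.trans hs.2) hc hi)
    hs
  obtain ⟨u, hu, hdu⟩ := h₂.exists_dist_le_of_isDiscreteGeodesic hhyp hgeo hK hC hL₂ hc₂ hi
  refine ⟨u, hu, (dist_triangle _ (c i) _).trans ?_⟩
  unfold fellowTravelBound
  linarith

theorem exists_dist_le_of_mem_geodesicSegment {T₁ T₂ : Type*} [MetricSpace T₁] [MetricSpace T₂]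
    (hK : 1 ≤ K) (hC : 0 ≤ C) (hT₂ : IsGeodesicSpace T₂) {f₁ : T₁ → X} {f₂ : T₂ → X}
    (hf₁ : IsQIE (fun a b : T₁ => dist a b) (fun a b : X => dist a b) f₁ K C)
    (hf₂ : IsQIE (fun a b : T₂ => dist a b) (fun a b : X => dist a b) f₂ K C)
    {γ : ℝ → T₁} {p q : T₁} (hγ : IsGeodesicSegment γ p q) {p' q' : T₂} (hp : f₂ p' = f₁ p)
    (hq : f₂ q' = f₁ q) {s : ℝ} (hs : s ∈ Icc 0 (dist p q)) :
    ∃ y : T₂, dist (f₁ (γ s)) (f₂ y) ≤ fellowTravelBound δ K C := by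
  obtain ⟨γ', hγ'⟩ := hT₂ p' q'
  obtain ⟨u, -, hu⟩ := (hγ.isQuasiGeodesicOn_comp hf₁).exists_dist_le_of_endpoints hhyp hgeo
    hK hC (IsGeodesicSegment.isQuasiGeodesicOn_comp (γ := γ') hγ' hf₂) dist_nonneg
    (by simp [hγ.1, hγ'.1, hp]) (by simp [hγ.2.1, hγ'.2.1, hq]) hs
  exact ⟨γ' u, hu⟩

end QuasiGeodesic

-- Choose `y` for one representative of each orbit and transport it; freeness makes the
-- transporting group element unique, which is what makes the result equivariant.
theorem exists_equivariant_of_forall_exists {H α β : Type*} [Group H] [PseudoEMetricSpace α]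
    [PseudoEMetricSpace β] (a : H →* (α ≃ᵢ α)) (b : H →* (β ≃ᵢ β))
    (hfree : ∀ h x, a h x = x → h = 1) {P : α → β → Prop}
    (hP : ∀ h x y, P x y → P (a h x) (b h y)) (hex : ∀ x, ∃ y, P x y) :
    ∃ ψ : α → β, (∀ x, P x (ψ x)) ∧ ∀ h x, ψ (a h x) = b h (ψ x) := by
  have ha_mul : ∀ h k x, a (h * k) x = a h (a k x) := fun h k x => by simp
  let orbit : Setoid α :=
    { r := fun x y => ∃ h, a h x = y
      iseqv := ⟨fun x => ⟨1, by simp⟩, fun ⟨h, hxy⟩ => ⟨h⁻¹, by simp [← hxy]⟩,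
        fun ⟨h, hxy⟩ ⟨k, hyz⟩ => ⟨k * h, by rw [ha_mul, hxy, hyz]⟩⟩ }
  let rep : α → α := fun x => (Quotient.mk orbit x).out
  have hrep : ∀ x, ∃ h, a h (rep x) = x := fun x => Quotient.mk_out (s := orbit) x
  choose sel hsel using hrep
  have hrep_smul : ∀ h x, rep (a h x) = rep x := fun h x =>
    congrArg Quotient.out (Quotient.sound ⟨h⁻¹, by simp⟩)
  have hsel_unique : ∀ x h, a h (rep x) = x → h = sel x := fun x h hx => by
    have e : a (sel x)⁻¹ x = rep x := by simpa using (congrArg (a (sel x)⁻¹) (hsel x)).symm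
    exact (inv_mul_eq_one.1 (hfree _ (rep x) (by rw [ha_mul, hx, e]))).symm
  choose Ψ hΨ using hex
  refine ⟨fun x => b (sel x) (Ψ (rep x)), fun x => ?_, fun h x => ?_⟩
  · simpa only [hsel] using hP (sel x) _ _ (hΨ (rep x))
  · have hsel_smul : sel (a h x) = h * sel x :=
      (hsel_unique _ _ (by rw [hrep_smul, ha_mul, hsel])).symm
    simp only [hrep_smul, hsel_smul, map_mul, IsometryEquiv.mul_apply]

theorem IsQIE.of_forall_dist_le {X Y Z : Type*} [PseudoMetricSpace X] [PseudoMetricSpace Y]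
    [PseudoMetricSpace Z] {f : X → Z} {g : Y → Z} {ψ : X → Y} {K C D : ℝ} (hK : 1 ≤ K)
    (hC : 0 ≤ C) (hf : IsQIE (fun x x' : X => dist x x') (fun z z' : Z => dist z z') f K C)
    (hg : IsQIE (fun y y' : Y => dist y y') (fun z z' : Z => dist z z') g K C)
    (hψ : ∀ x, dist (f x) (g (ψ x)) ≤ D) :
    IsQIE (fun x x' : X => dist x x') (fun y y' : Y => dist y y') ψ (K ^ 2)
      (K * (2 * C + 2 * D)) := by
  intro x x'
  have hK0 : 0 < K := by linarith
  have hD : 0 ≤ D := dist_nonneg.trans (hψ x)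
  have hgf := dist_triangle4 (g (ψ x)) (f x) (f x') (g (ψ x'))
  have hfg := dist_triangle4 (f x) (g (ψ x)) (g (ψ x')) (f x')
  rw [dist_comm (g (ψ x)) (f x)] at hgf
  rw [dist_comm (g (ψ x')) (f x')] at hfg
  have hψx := hψ x
  have hψx' := hψ x'
  have hlow : dist x x' ≤ K * (dist (f x) (f x') + C) :=
    le_mul_add_of_one_div_mul_sub_le hK0 (hf x x').1
  have hup : dist (ψ x) (ψ x') ≤ K * (dist (g (ψ x)) (g (ψ x')) + C) :=
    le_mul_add_of_one_div_mul_sub_le hK0 (hg (ψ x) (ψ x')).1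
  have hf₂ : dist (f x) (f x') ≤ K * dist x x' + C := (hf x x').2
  have hg₂ : dist (g (ψ x)) (g (ψ x')) ≤ K * dist (ψ x) (ψ x') + C := (hg (ψ x) (ψ x')).2
  constructor
  · have h₁ : dist x x' ≤ K ^ 2 * dist (ψ x) (ψ x') + K * (2 * C + 2 * D) := by
      have := mul_le_mul_of_nonneg_left
        (show dist (f x) (f x') + C ≤ K * dist (ψ x) (ψ x') + 2 * C + 2 * D by linarith) hK0.le
      linarith
    have h₂ : (2 * C + 2 * D) / K ≤ K * (2 * C + 2 * D) :=
      (div_le_self (by positivity) hK).trans (le_mul_of_one_le_left (by positivity) hK)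
    have h₃ : 1 / K ^ 2 * dist x x' ≤ dist (ψ x) (ψ x') + (2 * C + 2 * D) / K := by
      rw [div_mul_eq_mul_div, one_mul, div_le_iff₀ (by positivity)]
      calc dist x x' ≤ K ^ 2 * dist (ψ x) (ψ x') + K * (2 * C + 2 * D) := h₁
        _ = (dist (ψ x) (ψ x') + (2 * C + 2 * D) / K) * K ^ 2 := by field_simp
    linarith
  · have := mul_le_mul_of_nonneg_left
      (show dist (g (ψ x)) (g (ψ x')) + C ≤ K * dist x x' + 2 * C + 2 * D by linarith) hK0.le
    show dist (ψ x) (ψ x') ≤ K ^ 2 * dist x x' + K * (2 * C + 2 * D)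
    linarith

/-- Maps between cores: for nested subgroups `H₁ ≤ H₂` of a hyperbolic group with
equivariant based `(K, C)`-quasi-isometric embeddings of ℝ-trees `T₁`, `T₂`, there is an
`H₁`-equivariant `(K', C')`-quasi-isometric embedding `T₁ → T₂`, with `K', C'` depending
only on `δ`, `K`, `C`. -/
theorem map_between_cores
    (δ K C : ℝ) (hδ : 0 ≤ δ) (hK : 1 ≤ K) (hC : 0 ≤ C) :
    ∃ K' C' : ℝ, 1 ≤ K' ∧ 0 ≤ C' ∧
      ∀ (G : Type) [Group G] (S : Set G), S.Finite → Subgroup.closure S = ⊤ →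
        IsHyperbolic (wordDist S) δ →
        ∀ (H₁ H₂ : Subgroup G) (h₁₂ : H₁ ≤ H₂),
        ∀ (T₁ : Type) [MetricSpace T₁] (T₂ : Type) [MetricSpace T₂],
          IsRTree T₁ → IsRTree T₂ →
          ∀ (t₁ : T₁) (t₂ : T₂) (a₁ : H₁ →* (T₁ ≃ᵢ T₁)) (a₂ : H₂ →* (T₂ ≃ᵢ T₂)),
            (∀ (h : H₁) (t : T₁), a₁ h t = t → h = 1) →
            (∀ (h : H₂) (t : T₂), a₂ h t = t → h = 1) →
            ∀ (f₁ : T₁ → G) (f₂ : T₂ → G),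
              IsQIE (fun x y : T₁ => dist x y) (wordDist S) f₁ K C →
              IsQIE (fun x y : T₂ => dist x y) (wordDist S) f₂ K C →
              (∀ (h : H₁) (t : T₁), f₁ (a₁ h t) = (h : G) * f₁ t) →
              (∀ (h : H₂) (t : T₂), f₂ (a₂ h t) = (h : G) * f₂ t) →
              f₁ t₁ = 1 → f₂ t₂ = 1 →
              (∀ x : T₁, LiesOnOrbitGeodesic a₁ t₁ x) →
              ∃ ψ : T₁ → T₂,
                IsQIE (fun x y : T₁ => dist x y) (fun x y : T₂ => dist x y) ψ K' C' ∧
                ∀ (h : H₁) (x : T₁), ψ (a₁ h x) = a₂ (Subgroup.inclusion h₁₂ h) (ψ x) := by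
  have hB := fellowTravelBound_nonneg hδ (zero_le_one.trans hK) hC
  refine ⟨K ^ 2, K * (2 * C + 2 * fellowTravelBound δ K C), by nlinarith,
    mul_nonneg (by linarith) (by linarith), ?_⟩
  intro G _ S _ hgen hhyp H₁ H₂ h₁₂ T₁ _ T₂ _ _ hT₂ t₁ t₂ a₁ a₂ hfree₁ _ f₁ f₂ hf₁ hf₂ heq₁ heq₂
    ht₁ ht₂ horb
  let _ := wordPseudoMetricSpace hgen
  have hgeo := hasDiscreteGeodesics_wordPseudoMetricSpace hgen
  have hnear (x : T₁) : ∃ y, wordDist S (f₁ x) (f₂ y) ≤ fellowTravelBound δ K C := by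
    obtain ⟨g, g', γ, hγ, s, hs, rfl⟩ := horb x
    have hf₂₁ (g : H₁) : f₂ (a₂ (Subgroup.inclusion h₁₂ g) t₂) = f₁ (a₁ g t₁) := by
      rw [heq₂, heq₁, ht₁, ht₂, Subgroup.coe_inclusion]
    exact exists_dist_le_of_mem_geodesicSegment hhyp hgeo hK hC hT₂.1 hf₁ hf₂ hγ (hf₂₁ g)
      (hf₂₁ g') hs
  obtain ⟨ψ, hψ, hequiv⟩ := exists_equivariant_of_forall_exists a₁
    (a₂.comp (Subgroup.inclusion h₁₂)) hfree₁
    (fun h x y hxy => by simpa [heq₁, heq₂, wordDist_mul_left] using hxy) hnear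
  exact ⟨ψ, hf₁.of_forall_dist_le hK hC hf₂ hψ, hequiv⟩
end
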